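/- arXiv:1803.09485 — 3 statements merged into one kernel-verified Lean document; each statement's English description precedes it below -/
import Mathlib

section
/- There is a finitely branching tree A ⊆ ω^{<ω} such that: A has no leaves; A (coded as a subset of ω) is quasiminimal; and ran(π₁ ∘ f) = A for every f ∈ [A], where π₁ is the second projection of the recursive pairing function. In particular, A is a uniformly e-pointed tree with respect to functions. -/
/-!  Common definitions: mass problems in Baire space, Medvedev reducibility,
enumeration reducibility, trees, and related notions. -/

/-- A Turing functional, given by a monotone partial recursive map taking a
finite initial segment of the oracle and an input to an output value. -/
structure TuringFunctional where
  app : List ℕ × ℕ →. ℕ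
  partrec : Partrec app
  mono : ∀ {σ τ : List ℕ} {n y : ℕ}, σ <+: τ → y ∈ app (σ, n) → y ∈ app (τ, n)

/-- `Φ.Total g f` means that `Φ(g)` is total and equals `f`. -/
def TuringFunctional.Total (Φ : TuringFunctional) (g f : ℕ → ℕ) : Prop :=
  ∀ n, ∃ k, f n ∈ Φ.app ((List.range k).map g, n)

/-- Medvedev reducibility `A ≤ₛ B` between mass problems. -/
def MedvedevLE (A B : Set (ℕ → ℕ)) : Prop :=
  ∃ Φ : TuringFunctional, ∀ g ∈ B, ∃ f, Φ.Total g f ∧ f ∈ A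

/-- Medvedev equivalence. -/
def MedvedevEquiv (A B : Set (ℕ → ℕ)) : Prop := MedvedevLE A B ∧ MedvedevLE B A

/-- The problem of enumerability of `A`: all functions with range `A`. -/
def EProb (A : Set ℕ) : Set (ℕ → ℕ) := {f | Set.range f = A}

/-- The graph of `f`, coded as a set of naturals via the pairing function. -/
def graphSet (f : ℕ → ℕ) : Set ℕ := Set.range fun n => Nat.pair n (f n)

/-- The `e`-th enumeration operator applied to a set `B`:
`x` is enumerated iff for some (code `u` of a) finite list contained in `B`,
the `e`-th partial recursive function halts on `⟨x, u⟩`. -/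
def enumOpApply (e : ℕ) (B : Set ℕ) : Set ℕ :=
  {x | ∃ u : ℕ, ((Denumerable.ofNat Nat.Partrec.Code e).eval (Nat.pair x u)).Dom ∧
        ∀ y ∈ Denumerable.ofNat (List ℕ) u, y ∈ B}

/-- Enumeration reducibility between subsets of `ℕ`. -/
def EnumLE (A B : Set ℕ) : Prop := ∃ e : ℕ, enumOpApply e B = A

/-- Enumeration equivalence. -/
def EnumEquiv (A B : Set ℕ) : Prop := EnumLE A B ∧ EnumLE B A

/-- `A` is recursively enumerable: it is the domain of a partial recursive function. -/
def REset (A : Set ℕ) : Prop := ∃ c : Nat.Partrec.Code, A = {x | (c.eval x).Dom}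

/-- `A` is quasiminimal: not r.e., and every total function whose graph
enumeration-reduces to `A` is recursive. -/
def Quasiminimal (A : Set ℕ) : Prop :=
  ¬ REset A ∧ ∀ f : ℕ → ℕ, EnumLE (graphSet f) A → Computable f

/-- `A` (as a set) has cototal enumeration degree. -/
def CototalDeg (A : Set ℕ) : Prop := ∃ B : Set ℕ, EnumEquiv B A ∧ EnumLE B Bᶜ

/-- The set `K_A = {⟨e,x⟩ : x ∈ Ψ_e(A)}`. -/
def Kset (A : Set ℕ) : Set ℕ := {p | p.unpair.2 ∈ enumOpApply p.unpair.1 A}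

/-- The skip of `A`. -/
def skipSet (A : Set ℕ) : Set ℕ := (Kset A)ᶜ

/-- The recursive join of two subsets of `ℕ`. -/
def joinSet (A B : Set ℕ) : Set ℕ :=
  {n | (n % 2 = 0 ∧ n / 2 ∈ A) ∨ (n % 2 = 1 ∧ n / 2 ∈ B)}

/-- `A` is recursively enumerable in (the characteristic function of) `X`,
i.e. `A ≤ₑ X ⊕ Xᶜ`. -/
def REin (A X : Set ℕ) : Prop := EnumLE A (joinSet X Xᶜ)

/-- Trees: subsets of `ω^{<ω}` closed under initial segments. -/
def IsTree (T : Set (List ℕ)) : Prop := ∀ ⦃σ τ : List ℕ⦄, σ <+: τ → τ ∈ T → σ ∈ T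

/-- A leaf of `T`: a node with no proper extension in `T`. -/
def IsLeaf (T : Set (List ℕ)) (σ : List ℕ) : Prop :=
  σ ∈ T ∧ ∀ τ ∈ T, σ <+: τ → τ = σ

/-- `T` has no leaves. -/
def NoLeaves (T : Set (List ℕ)) : Prop := ∀ σ ∈ T, ¬ IsLeaf T σ

/-- `T` is finitely branching. -/
def FinBranching (T : Set (List ℕ)) : Prop := ∀ σ ∈ T, {n : ℕ | σ ++ [n] ∈ T}.Finite

/-- `[T]`: the set of infinite paths through `T`. -/
def Paths (T : Set (List ℕ)) : Set (ℕ → ℕ) := {f | ∀ n, (List.range n).map f ∈ T}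

/-- A tree coded as a subset of `ℕ`. -/
def codeTree (T : Set (List ℕ)) : Set ℕ := Encodable.encode '' T

/-- `T` is `h`-bounded. -/
def BoundedTree (h : ℕ → ℕ) (T : Set (List ℕ)) : Prop :=
  ∀ σ ∈ T, ∀ i : ℕ, ∀ hi : i < σ.length, σ.get ⟨i, hi⟩ < h i

/-- A uniformly e-pointed tree with respect to functions. -/
def UEPfun (T : Set (List ℕ)) : Prop :=
  IsTree T ∧ FinBranching T ∧ NoLeaves T ∧
    ∃ e : ℕ, ∀ g ∈ Paths T, enumOpApply e (graphSet g) = codeTree T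

/-- A uniformly e-pointed tree with respect to sets (a subtree of `2^{<ω}`). -/
def UEPset (T : Set (List ℕ)) : Prop :=
  IsTree T ∧ (∀ σ ∈ T, ∀ i ∈ σ, i ≤ 1) ∧ NoLeaves T ∧
    ∃ e : ℕ, ∀ g ∈ Paths T, enumOpApply e {n | g n = 1} = codeTree T

/-- Prepend `i` to a function. -/
def consFun (i : ℕ) (f : ℕ → ℕ) : ℕ → ℕ := fun n => Nat.casesOn n i fun m => f m

/-- The mass problem `0⌢A ∪ 1⌢B`, representing the meet of the degrees of `A` and `B`. -/
def meetProb (A B : Set (ℕ → ℕ)) : Set (ℕ → ℕ) := consFun 0 '' A ∪ consFun 1 '' B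

/-- A mass problem has meet-irreducible Medvedev degree: its degree is not the
meet of two strictly larger degrees. -/
def MeetIrred (X : Set (ℕ → ℕ)) : Prop :=
  ¬ ∃ B C : Set (ℕ → ℕ), MedvedevEquiv (meetProb B C) X ∧
      (MedvedevLE X B ∧ ¬ MedvedevLE B X) ∧ (MedvedevLE X C ∧ ¬ MedvedevLE C X)

/-- `σ` is an initial segment of `f`. -/
def strPrefix (σ : List ℕ) (f : ℕ → ℕ) : Prop := (List.range σ.length).map f = σ

/-- A uniform mass problem. -/
def UniformProb (A : Set (ℕ → ℕ)) : Prop :=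
  ∀ σ : List ℕ, (∃ f ∈ A, strPrefix σ f) → MedvedevLE {f | f ∈ A ∧ strPrefix σ f} A

/-- The `{0,1}`-valued diagonally nonrecursive functions. -/
def DNR2 : Set (ℕ → ℕ) :=
  {f | (∀ n, f n ≤ 1) ∧
    ∀ e y : ℕ, y ∈ (Denumerable.ofNat Nat.Partrec.Code e).eval e → f e ≠ y}

/-- `C_A`: injective enumerations of subsets of `A`. -/
def CProb (A : Set ℕ) : Set (ℕ → ℕ) :=
  {f | Function.Injective f ∧ Set.range f ⊆ A}


/-!
The tree is built by finite forcing with finite trees as conditions. A legal extension of a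
finite tree `p` grows `p` only above its leaves, and a new branch above a leaf `ℓ` must first
carry, as second components `π₁` of its entries, the codes of the nodes of `p` not yet listed
along `ℓ` (the backlog of `ℓ`), and afterwards only codes of nodes of the extension. Legality
is transitive once the intermediate tree has grown above every leaf of `p`, and every stage
does so. Hence along every path all nodes of the limit tree `A` get listed and nothing else
does, i.e. `ran(π₁ ∘ f) = A`; the operator `w ↦ π₁(π₁ w)` then recovers `A` from the graph of
any path. A node acquires all its children one stage after it appears, so `A` is finitely
branching.

Between these growth steps we meet two kinds of requirements. For the `c`-th r.e. set `W_c`,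
some leaf receives its block followed by one of the infinitely many candidates `⟨j, 0⟩` lying
outside `W_c`, if there is one; if there is none, `W_c ⊆ A` would force infinite branching, so
`W_c ≠ A`. For the `e`-th enumeration operator, a legal extension making `Ψ_e` enumerate
`⟨n, y⟩` and `⟨n, y'⟩` with `y ≠ y'` is added if one exists, so `Ψ_e(A)` is no graph; if none
exists and `Ψ_e(A)` is the graph of `f`, then `f n` is the only `y` any legal extension can
force, and since legality of a finite extension is primitive recursive, searching for one
computes `f`.
-/

open Nat.Partrec (Code)

namespace EPointedTree

abbrev FinTree := List (List ℕ)

structure IsFiniteTree (p : FinTree) : Prop where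
  nil_mem : [] ∈ p
  isTree : IsTree {σ | σ ∈ p}

def IsLeafOf (p : FinTree) (σ : List ℕ) : Prop := ∀ τ ∈ p, σ <+: τ → τ = σ

theorem IsLeafOf.anti {p q : FinTree} {σ : List ℕ} (hpq : ∀ τ ∈ p, τ ∈ q) (h : IsLeafOf q σ) :
    IsLeafOf p σ :=
  fun τ hτ => h τ (hpq τ hτ)

def labels (σ : List ℕ) : List ℕ := σ.map fun x => x.unpair.2

def codes (p : FinTree) : List ℕ := p.map Encodable.encode

theorem codes_mono {p q : FinTree} (h : ∀ σ ∈ p, σ ∈ q) : ∀ x ∈ codes p, x ∈ codes q := by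
  simp only [codes, List.mem_map]
  rintro x ⟨σ, hσ, rfl⟩
  exact ⟨σ, h σ hσ, rfl⟩

theorem zero_mem_codes {p : FinTree} (h : [] ∈ p) : 0 ∈ codes p :=
  List.mem_map.mpr ⟨[], h, rfl⟩

def maxPrefix (p : FinTree) (σ : List ℕ) : List ℕ :=
  σ.take (Nat.findGreatest (fun k => σ.take k ∈ p) σ.length)

section maxPrefix

variable {p : FinTree} {σ τ : List ℕ}

theorem maxPrefix_prefix : maxPrefix p σ <+: σ := List.take_prefix _ _

theorem length_le_maxPrefix (hτ : τ ∈ p) (h : τ <+: σ) : τ.length ≤ (maxPrefix p σ).length := by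
  rw [maxPrefix, List.length_take, min_eq_left (Nat.findGreatest_le _)]
  exact Nat.le_findGreatest h.length_le (by rwa [← List.prefix_iff_eq_take.mp h])

theorem maxPrefix_mem (hτ : τ ∈ p) (h : τ <+: σ) : maxPrefix p σ ∈ p :=
  Nat.findGreatest_spec (P := fun k => σ.take k ∈ p) h.length_le
    (by rwa [← List.prefix_iff_eq_take.mp h])

theorem maxPrefix_mem_of_nil_mem (h : [] ∈ p) : maxPrefix p σ ∈ p :=
  maxPrefix_mem h List.nil_prefix

theorem maxPrefix_eq_of_isLeafOf (hτ : τ ∈ p) (hleaf : IsLeafOf p τ) (h : τ <+: σ) :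
    maxPrefix p σ = τ :=
  hleaf _ (maxPrefix_mem hτ h)
    (List.prefix_of_prefix_length_le h maxPrefix_prefix (length_le_maxPrefix hτ h))

theorem maxPrefix_of_prefix (hnil : [] ∈ p) {m : List ℕ} (hm : m <+: σ)
    (hle : (maxPrefix p σ).length ≤ m.length) : maxPrefix p m = maxPrefix p σ := by
  have hσm : maxPrefix p σ <+: m := List.prefix_of_prefix_length_le maxPrefix_prefix hm hle
  have h₁ := length_le_maxPrefix (maxPrefix_mem_of_nil_mem hnil) hσm
  have h₂ := length_le_maxPrefix (σ := σ) (maxPrefix_mem_of_nil_mem hnil)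
    (maxPrefix_prefix.trans hm)
  exact (List.prefix_of_prefix_length_le hσm maxPrefix_prefix h₁).eq_of_length (by omega) |>.symm

end maxPrefix

def backlog (p : FinTree) (ℓ : List ℕ) : List ℕ := (codes p).filter (· ∉ labels ℓ)

def pending (p : FinTree) (σ : List ℕ) : List ℕ := backlog p (maxPrefix p σ)

def newLabels (p : FinTree) (σ : List ℕ) : List ℕ := (labels σ).drop (maxPrefix p σ).length

structure IsLegalNode (p T : FinTree) (σ : List ℕ) : Prop where
  isLeafOf_maxPrefix : IsLeafOf p (maxPrefix p σ)
  take_prefix_pending : (newLabels p σ).take (pending p σ).length <+: pending p σ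
  drop_subset_codes : ∀ x ∈ (newLabels p σ).drop (pending p σ).length, x ∈ codes T
  pending_prefix : IsLeafOf T σ → pending p σ <+: newLabels p σ

structure LegalExt (p T : FinTree) : Prop where
  subset : ∀ σ ∈ p, σ ∈ T
  isTree : IsTree {σ | σ ∈ T}
  isLegalNode : ∀ σ ∈ T, σ ∉ p → IsLegalNode p T σ

theorem LegalExt.refl {p : FinTree} (hp : IsTree {σ | σ ∈ p}) : LegalExt p p :=
  ⟨fun _ h => h, hp, fun _ h h' => absurd h h'⟩

theorem IsLegalNode.mono {p T T' : FinTree} {σ : List ℕ} (h : IsLegalNode p T σ)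
    (hT : ∀ τ ∈ T, τ ∈ T') : IsLegalNode p T' σ where
  isLeafOf_maxPrefix := h.isLeafOf_maxPrefix
  take_prefix_pending := h.take_prefix_pending
  drop_subset_codes x hx := codes_mono hT x (h.drop_subset_codes x hx)
  pending_prefix hleaf := h.pending_prefix (hleaf.anti hT)

theorem LegalExt.append {p T T' : FinTree} (h : LegalExt p T) (h' : LegalExt p T') :
    LegalExt p (T ++ T') where
  subset σ hσ := List.mem_append_left _ (h.subset σ hσ)
  isTree σ τ hστ hτ := by
    rcases List.mem_append.mp hτ with hτ | hτ
    · exact List.mem_append_left _ (h.isTree hστ hτ)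
    · exact List.mem_append_right _ (h'.isTree hστ hτ)
  isLegalNode σ hσ hσp := by
    rcases List.mem_append.mp hσ with hσ | hσ
    · exact (h.isLegalNode σ hσ hσp).mono fun τ => List.mem_append_left _
    · exact (h'.isLegalNode σ hσ hσp).mono fun τ => List.mem_append_right _

theorem forall_mem_of_take_prefix {D S w : List ℕ} (htake : w.take D.length <+: D)
    (hdrop : ∀ x ∈ w.drop D.length, x ∈ S) (hD : ∀ x ∈ D, x ∈ S) : ∀ x ∈ w, x ∈ S := by
  intro x hx
  rw [← List.take_append_drop D.length w, List.mem_append] at hx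
  exact hx.elim (fun hx => hD x (htake.subset hx)) (hdrop x)

theorem pending_subset_codes (p : FinTree) (σ : List ℕ) : ∀ x ∈ pending p σ, x ∈ codes p :=
  fun _ hx => (List.mem_filter.mp hx).1

theorem IsLegalNode.newLabels_subset_codes {p T : FinTree} {σ : List ℕ} (h : IsLegalNode p T σ)
    (hpT : ∀ τ ∈ p, τ ∈ T) : ∀ x ∈ newLabels p σ, x ∈ codes T :=
  forall_mem_of_take_prefix h.take_prefix_pending h.drop_subset_codes
    fun x hx => codes_mono hpT x (pending_subset_codes p σ x hx)

theorem labels_eq_append_drop {m σ : List ℕ} (h : m <+: σ) :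
    labels σ = labels m ++ (labels σ).drop m.length := by
  have hm : labels m = (labels σ).take m.length := by
    rw [labels, labels, ← List.map_take, ← List.prefix_iff_eq_take.mp h]
  rw [hm, List.take_append_drop]

/-- A node of `r` outside `q` lies above a leaf `m` of `q`; as `q` has grown above every leaf
of `p`, `m ∉ p`, so `m` has already completed its `p`-block. -/
theorem LegalExt.trans {p q r : FinTree} (hnil : [] ∈ p) (hpq : LegalExt p q)
    (hqr : LegalExt q r) (hkill : ∀ ℓ ∈ p, IsLeafOf p ℓ → ¬IsLeafOf q ℓ) : LegalExt p r := by
  refine ⟨fun σ hσ => hqr.subset σ (hpq.subset σ hσ), hqr.isTree, fun σ hσ hσp => ?_⟩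
  by_cases hσq : σ ∈ q
  · exact (hpq.isLegalNode σ hσq hσp).mono hqr.subset
  set m := maxPrefix q σ with hm_def
  have hmq : m ∈ q := maxPrefix_mem_of_nil_mem (hpq.subset _ hnil)
  have hσ' := hqr.isLegalNode σ hσ hσq
  have hmp : m ∉ p := fun hmp =>
    hkill m hmp (hσ'.isLeafOf_maxPrefix.anti hpq.subset) hσ'.isLeafOf_maxPrefix
  have hm := hpq.isLegalNode m hmq hmp
  have hmax : maxPrefix p m = maxPrefix p σ :=
    maxPrefix_of_prefix hnil maxPrefix_prefix
      (length_le_maxPrefix (hpq.subset _ (maxPrefix_mem_of_nil_mem hnil)) maxPrefix_prefix)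
  have hpend : pending p m = pending p σ := by rw [pending, pending, hmax]
  have hlab : newLabels p σ = newLabels p m ++ newLabels q σ := by
    have hle : (maxPrefix p σ).length ≤ m.length :=
      length_le_maxPrefix (hpq.subset _ (maxPrefix_mem_of_nil_mem hnil)) maxPrefix_prefix
    rw [newLabels, newLabels, newLabels, hmax, ← hm_def]
    nth_rw 1 [labels_eq_append_drop (maxPrefix_prefix : m <+: σ)]
    rw [List.drop_append_of_le_length (by simpa [labels] using hle)]
  have hD : pending p σ <+: newLabels p m := hpend ▸ hm.pending_prefix hσ'.isLeafOf_maxPrefix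
  refine ⟨hmax ▸ hm.isLeafOf_maxPrefix, ?_, ?_, fun _ => hlab ▸ hD.trans (List.prefix_append _ _)⟩
  · rw [hlab, List.take_append_of_le_length hD.length_le, ← List.prefix_iff_eq_take.mp hD]
  · intro x hx
    rw [hlab, List.drop_append_of_le_length hD.length_le, List.mem_append] at hx
    rcases hx with hx | hx
    · exact codes_mono hqr.subset x (hm.drop_subset_codes x (by rwa [hpend]))
    · exact hσ'.newLabels_subset_codes hqr.subset x hx

theorem LegalExt.isFiniteTree {p T : FinTree} (hp : IsFiniteTree p) (h : LegalExt p T) :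
    IsFiniteTree T :=
  ⟨h.subset _ hp.nil_mem, h.isTree⟩

theorem LegalExt.labels_subset_codes {p T : FinTree} (hnil : [] ∈ p) (h : LegalExt p T)
    (hp : ∀ σ ∈ p, ∀ x ∈ labels σ, x ∈ codes p) : ∀ σ ∈ T, ∀ x ∈ labels σ, x ∈ codes T := by
  intro σ hσ x hx
  by_cases hσp : σ ∈ p
  · exact codes_mono h.subset x (hp σ hσp x hx)
  rw [labels_eq_append_drop (maxPrefix_prefix (p := p)), List.mem_append] at hx
  rcases hx with hx | hx
  · exact codes_mono h.subset x (hp _ (maxPrefix_mem_of_nil_mem hnil) x hx)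
  · exact (h.isLegalNode σ hσ hσp).newLabels_subset_codes h.subset x hx

theorem LegalExt.append_singleton_mem {p T : FinTree} {σ : List ℕ} {x : ℕ} (h : LegalExt p T)
    (hσ : σ ∈ p) (hleaf : ¬IsLeafOf p σ) (hx : σ ++ [x] ∈ T) : σ ++ [x] ∈ p := by
  by_contra hxp
  have hmax : maxPrefix p (σ ++ [x]) = σ := by
    rcases List.prefix_concat_iff.mp (maxPrefix_prefix (p := p) (σ := σ ++ [x])) with h' | h'
    · exact absurd (h' ▸ maxPrefix_mem hσ (List.prefix_append _ _)) hxp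
    · exact h'.eq_of_length_le (length_le_maxPrefix hσ (List.prefix_append _ _))
  exact hleaf (hmax ▸ (h.isLegalNode _ hx hxp).isLeafOf_maxPrefix)

def chain (ℓ ent : List ℕ) : FinTree := ent.inits.map (ℓ ++ ·)

theorem mem_chain {ℓ ent σ : List ℕ} : σ ∈ chain ℓ ent ↔ ∃ x, x <+: ent ∧ σ = ℓ ++ x := by
  simp [chain, List.mem_inits, eq_comm]

theorem prefix_append_cases {ℓ x τ : List ℕ} (h : τ <+: ℓ ++ x) :
    τ <+: ℓ ∨ ∃ y, y <+: x ∧ τ = ℓ ++ y := by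
  rcases List.prefix_or_prefix_of_prefix h (List.prefix_append ℓ x) with h' | h'
  · exact Or.inl h'
  · obtain ⟨y, rfl⟩ := List.prefix_iff_exists_eq_append.mp h'
    exact Or.inr ⟨y, (List.prefix_append_right_inj ℓ).mp h, rfl⟩

theorem take_prefix_of_prefix_append {w D L : List ℕ} (h : w <+: D ++ L) :
    w.take D.length <+: D := by
  have := List.prefix_take_iff (i := D.length).mpr
    ⟨(List.take_prefix _ w).trans h, List.length_take_le _ _⟩
  rwa [List.take_left' rfl] at this

theorem drop_subset_of_prefix_append {w D L : List ℕ} (h : w <+: D ++ L) :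
    ∀ x ∈ w.drop D.length, x ∈ L := by
  intro x hx
  rw [List.prefix_iff_eq_take.mp h, List.drop_take, List.drop_left' rfl] at hx
  exact List.mem_of_mem_take hx

def block (p : FinTree) (ℓ : List ℕ) : List ℕ := (backlog p ℓ).map (Nat.pair 0)

theorem labels_block (p : FinTree) (ℓ : List ℕ) : labels (block p ℓ) = backlog p ℓ := by
  simp [labels, block, Function.comp_def]

theorem LegalExt.append_chain {p T : FinTree} {ℓ tail : List ℕ} (hT : LegalExt p T)
    (hℓ : ℓ ∈ p) (hleaf : IsLeafOf p ℓ) (hcodes : ∀ x ∈ labels tail, x ∈ codes p) :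
    LegalExt p (T ++ chain ℓ (block p ℓ ++ tail)) := by
  set ent := block p ℓ ++ tail
  have hmem : ∀ {x}, x <+: ent → ℓ ++ x ∈ T ++ chain ℓ ent :=
    fun hx => List.mem_append_right _ (mem_chain.mpr ⟨_, hx, rfl⟩)
  refine ⟨fun σ hσ => List.mem_append_left _ (hT.subset σ hσ), ?_, ?_⟩
  · intro τ σ hτσ hσ
    rcases List.mem_append.mp hσ with hσ | hσ
    · exact List.mem_append_left _ (hT.isTree hτσ hσ)
    obtain ⟨x, hx, rfl⟩ := mem_chain.mp hσ
    rcases prefix_append_cases hτσ with h | ⟨y, hy, rfl⟩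
    · exact List.mem_append_left _ (hT.isTree h (hT.subset ℓ hℓ))
    · exact hmem (hy.trans hx)
  intro σ hσ hσp
  rcases List.mem_append.mp hσ with hσ | hσ
  · exact (hT.isLegalNode σ hσ hσp).mono fun τ => List.mem_append_left _
  obtain ⟨x, hx, rfl⟩ := mem_chain.mp hσ
  have hmax : maxPrefix p (ℓ ++ x) = ℓ :=
    maxPrefix_eq_of_isLeafOf hℓ hleaf (List.prefix_append _ _)
  have hnew : newLabels p (ℓ ++ x) = labels x := by
    simp [newLabels, hmax, labels]
  have hpend : pending p (ℓ ++ x) = backlog p ℓ := by rw [pending, hmax]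
  have hent : labels ent = backlog p ℓ ++ labels tail := by
    rw [labels, List.map_append, ← labels, ← labels, labels_block]
  have hlx : labels x <+: backlog p ℓ ++ labels tail := hent ▸ hx.map _
  refine ⟨by rw [hmax]; exact hleaf, ?_, ?_, ?_⟩ <;> rw [hnew, hpend]
  · exact take_prefix_of_prefix_append hlx
  · exact fun y hy => codes_mono (fun τ => List.mem_append_left _) y
      (codes_mono hT.subset y (hcodes y (drop_subset_of_prefix_append hlx y hy)))
  · intro hleafx
    have := hleafx _ (hmem (List.prefix_refl ent)) ((List.prefix_append_right_inj ℓ).mpr hx)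
    rw [← List.append_cancel_left this, hent]
    exact List.prefix_append _ _

theorem not_isLeafOf_of_mem_chain {T : FinTree} {ℓ ent : List ℕ} (hent : ent ≠ [])
    (h : ∀ σ ∈ chain ℓ ent, σ ∈ T) : ¬IsLeafOf T ℓ := fun hleaf => by
  have := hleaf _ (h _ (mem_chain.mpr ⟨ent, List.prefix_refl _, rfl⟩)) (List.prefix_append _ _)
  exact hent (by simpa using this)

def initSeg (v : ℕ → ℕ) (n : ℕ) : List ℕ := (List.range n).map v

theorem length_initSeg (v : ℕ → ℕ) (n : ℕ) : (initSeg v n).length = n := by simp [initSeg]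

theorem eq_initSeg_of_prefix {v : ℕ → ℕ} {n : ℕ} {τ : List ℕ} (h : τ <+: initSeg v n) :
    τ = initSeg v τ.length := by
  have hle : τ.length ≤ n := length_initSeg v n ▸ h.length_le
  conv_lhs => rw [List.prefix_iff_eq_take.mp h]
  rw [initSeg, ← List.map_take, List.take_range, min_eq_left hle, initSeg]

theorem initSeg_prefix (v : ℕ → ℕ) {m n : ℕ} (h : m ≤ n) : initSeg v m <+: initSeg v n := by
  rw [initSeg, initSeg, ← min_eq_left h, ← List.take_range, List.map_take]
  exact List.take_prefix _ _

theorem exists_of_mem_labels_initSeg {v : ℕ → ℕ} {n x : ℕ} (hx : x ∈ labels (initSeg v n)) :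
    ∃ i, (v i).unpair.2 = x := by
  simp only [labels, initSeg, List.map_map, List.mem_map] at hx
  obtain ⟨i, -, hi⟩ := hx
  exact ⟨i, hi⟩

/-- `v` leaves `p` through a leaf `ℓ`, and the block above `ℓ` lists the backlog of `ℓ`. -/
theorem exists_label_eq_of_legalExt {p : FinTree} (hnil : [] ∈ p) {v : ℕ → ℕ}
    (hv : ∀ n, ∃ T, LegalExt p T ∧ initSeg v n ∈ T) {x : ℕ} (hx : x ∈ codes p) :
    ∃ i, (v i).unpair.2 = x := by
  obtain ⟨N, hN⟩ : ∃ N, initSeg v N ∉ p := by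
    by_contra! h
    refine Set.infinite_range_of_injective (f := initSeg v) ?_
      ((List.finite_toSet p).subset (Set.range_subset_iff.mpr h))
    exact fun m n hmn => by simpa [length_initSeg] using congrArg List.length hmn
  obtain ⟨T, hT, hNT⟩ := hv N
  set ℓ := maxPrefix p (initSeg v N)
  have hℓ : ℓ ∈ p := maxPrefix_mem_of_nil_mem hnil
  have hleaf : IsLeafOf p ℓ := (hT.isLegalNode _ hNT hN).isLeafOf_maxPrefix
  have hℓv : ℓ = initSeg v ℓ.length := eq_initSeg_of_prefix maxPrefix_prefix
  by_cases hxℓ : x ∈ labels ℓ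
  · exact exists_of_mem_labels_initSeg (hℓv ▸ hxℓ)
  have hxD : x ∈ backlog p ℓ := List.mem_filter.mpr ⟨hx, by simpa using hxℓ⟩
  set M := ℓ.length + (backlog p ℓ).length
  have hℓM : ℓ <+: initSeg v M := hℓv ▸ initSeg_prefix v (Nat.le_add_right _ _)
  have hMp : initSeg v M ∉ p := fun hM => by
    have := congrArg List.length (hleaf _ hM hℓM)
    rw [length_initSeg] at this
    exact List.ne_nil_of_mem hxD (List.eq_nil_of_length_eq_zero (by omega))
  obtain ⟨T', hT', hMT'⟩ := hv M
  have hmax : maxPrefix p (initSeg v M) = ℓ := maxPrefix_eq_of_isLeafOf hℓ hleaf hℓM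
  have hlen : (newLabels p (initSeg v M)).length = (backlog p ℓ).length := by
    simp [newLabels, hmax, labels, length_initSeg, M]
  have htake : newLabels p (initSeg v M) <+: backlog p ℓ := by
    simpa only [pending, hmax, List.take_of_length_le hlen.le] using
      (hT'.isLegalNode _ hMT' hMp).take_prefix_pending
  have hD : newLabels p (initSeg v M) = backlog p ℓ := htake.eq_of_length hlen
  exact exists_of_mem_labels_initSeg (List.mem_of_mem_drop (hD ▸ hxD : x ∈ newLabels p _))

theorem exists_code_dom_iff {P : ℕ → Prop} (hP : PrimrecPred P) :
    ∃ c : Code, ∀ z, (c.eval z).Dom ↔ P z := by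
  classical
  obtain ⟨c, hc⟩ := Code.exists_code.mp (Partrec.nat_iff.mp (Computable.ofOption
    (Primrec.ite hP (Primrec.const (some 0)) (Primrec.const none)).to_comp))
  refine ⟨c, fun z => ?_⟩
  rw [hc]
  by_cases h : P z <;> simp [h]

theorem exists_enumOpApply_eq_image {h : ℕ → ℕ} (hh : Primrec h) :
    ∃ e, ∀ B, enumOpApply e B = h '' B := by
  have hR : PrimrecRel fun (w z : ℕ) => h w = z.unpair.1 :=
    Primrec.eq.comp (hh.comp Primrec.fst) (Primrec.fst.comp (Primrec.unpair.comp Primrec.snd))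
  obtain ⟨c, hc⟩ := exists_code_dom_iff ((PrimrecRel.exists_mem_list hR).comp
    ((Primrec.ofNat (List ℕ)).comp (Primrec.snd.comp Primrec.unpair)) Primrec.id)
  refine ⟨Encodable.encode c, fun B => Set.ext fun x => ?_⟩
  simp only [enumOpApply, Denumerable.ofNat_encode, hc, Nat.unpair_pair, id_eq, Set.mem_image]
  constructor
  · rintro ⟨u, ⟨w, hw, rfl⟩, hu⟩
    exact ⟨w, hu w hw, rfl⟩
  · rintro ⟨w, hw, rfl⟩
    exact ⟨Encodable.encode [w], by simp, by simpa using hw⟩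

theorem enumOpApply_mono (e : ℕ) {B B' : Set ℕ} (h : B ⊆ B') :
    enumOpApply e B ⊆ enumOpApply e B' :=
  fun _ ⟨u, hu, hsub⟩ => ⟨u, hu, fun y hy => h (hsub y hy)⟩

theorem exists_mem_enumOpApply_of_mem_iUnion {B : ℕ → Set ℕ} (hB : Monotone B) {e x : ℕ}
    (hx : x ∈ enumOpApply e (⋃ t, B t)) : ∃ t, x ∈ enumOpApply e (B t) := by
  obtain ⟨u, hu, hsub⟩ := hx
  obtain ⟨t, ht⟩ := hB.directed_le.exists_mem_subset_of_finset_subset_biUnion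
    (s := (Denumerable.ofNat (List ℕ) u).toFinset) fun y hy => hsub y (by simpa using hy)
  exact ⟨t, u, hu, fun y hy => ht (by simpa using hy)⟩

theorem dom_iff_exists_evaln_isSome {c : Code} {n : ℕ} :
    (c.eval n).Dom ↔ ∃ k, (c.evaln k n).isSome := by
  simp only [Part.dom_iff_mem, Code.evaln_complete, Option.isSome_iff_exists]
  exact ⟨fun ⟨y, k, h⟩ => ⟨k, y, h⟩, fun ⟨k, y, h⟩ => ⟨y, k, h⟩⟩

theorem mem_codeTree_iff {L : FinTree} {x : ℕ} : x ∈ codeTree {σ | σ ∈ L} ↔ x ∈ codes L := by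
  simp [codeTree, codes]

theorem mem_enumOpApply_codeTree_iff {e x : ℕ} {L : FinTree} :
    x ∈ enumOpApply e (codeTree {σ | σ ∈ L}) ↔ ∃ u k : ℕ,
      (∀ w ∈ Denumerable.ofNat (List ℕ) u, w ∈ codes L) ∧
      ((Denumerable.ofNat Code e).evaln k (Nat.pair x u)).isSome := by
  simp only [enumOpApply, Set.mem_ofPred_eq, dom_iff_exists_evaln_isSome, mem_codeTree_iff]
  exact ⟨fun ⟨u, ⟨k, hk⟩, hu⟩ => ⟨u, k, hu, hk⟩, fun ⟨u, k, hu, hk⟩ => ⟨u, ⟨k, hk⟩, hu⟩⟩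

/-- `(L, u, y, k)` certifies, within `k` steps, that the legal extension `L` of `p` makes `Ψ_e`
enumerate `⟨n, y⟩` from the finite set coded by `u`. -/
def IsWitness (p : FinTree) (e n : ℕ) (w : FinTree × ℕ × ℕ × ℕ) : Prop :=
  LegalExt p w.1 ∧ (∀ x ∈ Denumerable.ofNat (List ℕ) w.2.1, x ∈ codes w.1) ∧
    ((Denumerable.ofNat Code e).evaln w.2.2.2 (Nat.pair (Nat.pair n w.2.2.1) w.2.1)).isSome

theorem exists_isWitness_iff {p L : FinTree} {e n y : ℕ} :
    (∃ u k, IsWitness p e n (L, u, y, k)) ↔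
      LegalExt p L ∧ Nat.pair n y ∈ enumOpApply e (codeTree {σ | σ ∈ L}) := by
  rw [mem_enumOpApply_codeTree_iff]
  exact ⟨fun ⟨u, k, hL, hu, hk⟩ => ⟨hL, u, k, hu, hk⟩, fun ⟨hL, u, k, hu, hk⟩ => ⟨u, k, hL, hu, hk⟩⟩

section Primrec

open Primrec

theorem primrecRel_mem {α : Type} [Primcodable α] : PrimrecRel fun (a : α) (L : List α) => a ∈ L :=
  ((PrimrecRel.exists_mem_list Primrec.eq).comp snd fst).of_eq fun _ => by simp

theorem primrecRel_isPrefix {α : Type} [Primcodable α] :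
    PrimrecRel fun l₁ l₂ : List α => l₁ <+: l₂ :=
  (Primrec.eq.comp fst (list_take.comp (list_length.comp fst) snd)).of_eq fun _ =>
    List.prefix_iff_eq_take.symm

theorem primrec_labels : Primrec labels :=
  list_map .id (snd.comp (unpair.comp snd)).to₂

theorem primrec_codes : Primrec codes :=
  list_map .id (Primrec.encode.comp snd).to₂

theorem primrecRel_mem_codes : PrimrecRel fun (x : ℕ) (T : FinTree) => x ∈ codes T :=
  primrecRel_mem.comp fst (primrec_codes.comp snd)

theorem primrec₂_maxPrefix : Primrec₂ maxPrefix :=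
  list_take.comp (nat_findGreatest (list_length.comp snd)
    (primrecRel_mem.comp (list_take.comp snd (snd.comp fst)) (fst.comp fst))) snd

theorem primrec₂_backlog : Primrec₂ backlog := by
  have h : PrimrecRel fun (x : ℕ) (ℓ : List ℕ) => x ∉ labels ℓ :=
    (primrecRel_mem.comp fst (primrec_labels.comp snd)).not
  exact (PrimrecRel.listFilter h).comp (primrec_codes.comp fst) snd

theorem primrec₂_pending : Primrec₂ pending :=
  primrec₂_backlog.comp fst primrec₂_maxPrefix

theorem primrec₂_newLabels : Primrec₂ newLabels :=
  list_drop.comp (list_length.comp primrec₂_maxPrefix) (primrec_labels.comp snd)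

theorem primrecRel_isLeafOf : PrimrecRel IsLeafOf := by
  have h : PrimrecRel fun (τ σ : List ℕ) => ¬σ <+: τ ∨ τ = σ :=
    (primrecRel_isPrefix.comp snd fst).not.or (Primrec.eq.comp fst snd)
  exact ((PrimrecRel.forall_mem_list h).comp fst snd).of_eq fun _ => by
    simp only [IsLeafOf, imp_iff_not_or]

theorem primrecPred_isLegalNode :
    PrimrecPred fun x : (FinTree × FinTree) × List ℕ => IsLegalNode x.1.1 x.1.2 x.2 := by
  have hp : Primrec fun x : (FinTree × FinTree) × List ℕ => x.1.1 := fst.comp fst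
  have hT : Primrec fun x : (FinTree × FinTree) × List ℕ => x.1.2 := snd.comp fst
  have hpend := primrec₂_pending.comp hp snd
  have hnew := primrec₂_newLabels.comp hp snd
  have h₁ : PrimrecPred fun x : (FinTree × FinTree) × List ℕ =>
      IsLeafOf x.1.1 (maxPrefix x.1.1 x.2) :=
    primrecRel_isLeafOf.comp hp (primrec₂_maxPrefix.comp hp snd)
  have h₂ : PrimrecPred fun x : (FinTree × FinTree) × List ℕ =>
      (newLabels x.1.1 x.2).take (pending x.1.1 x.2).length <+: pending x.1.1 x.2 :=
    primrecRel_isPrefix.comp (list_take.comp (list_length.comp hpend) hnew) hpend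
  have h₃ : PrimrecPred fun x : (FinTree × FinTree) × List ℕ =>
      ∀ y ∈ (newLabels x.1.1 x.2).drop (pending x.1.1 x.2).length, y ∈ codes x.1.2 :=
    (PrimrecRel.forall_mem_list primrecRel_mem_codes).comp
      (list_drop.comp (list_length.comp hpend) hnew) hT
  have h₄ : PrimrecPred fun x : (FinTree × FinTree) × List ℕ =>
      ¬IsLeafOf x.1.2 x.2 ∨ pending x.1.1 x.2 <+: newLabels x.1.1 x.2 :=
    (primrecRel_isLeafOf.comp hT snd).not.or (primrecRel_isPrefix.comp hpend hnew)
  refine (h₁.and (h₂.and (h₃.and h₄))).of_eq fun x => ?_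
  rw [← imp_iff_not_or]
  exact ⟨fun ⟨h₁, h₂, h₃, h₄⟩ => ⟨h₁, h₂, h₃, h₄⟩, fun ⟨h₁, h₂, h₃, h₄⟩ => ⟨h₁, h₂, h₃, h₄⟩⟩

theorem isTree_iff_forall_take {T : FinTree} :
    IsTree {σ | σ ∈ T} ↔ ∀ τ ∈ T, ∀ k < τ.length + 1, τ.take k ∈ T := by
  refine ⟨fun h τ hτ k _ => h (List.take_prefix k τ) hτ, fun h σ τ hστ hτ => ?_⟩
  rw [List.prefix_iff_eq_take.mp hστ]
  exact h τ hτ _ (Nat.lt_succ_of_le hστ.length_le)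

theorem primrecRel_legalExt : PrimrecRel LegalExt := by
  have hnode : PrimrecRel fun (σ : List ℕ) (x : FinTree × FinTree) =>
      σ ∈ x.1 ∨ IsLegalNode x.1 x.2 σ :=
    (primrecRel_mem.comp fst (fst.comp snd)).or (primrecPred_isLegalNode.comp (pair snd fst))
  have hmem : PrimrecRel fun (k : ℕ) (x : List ℕ × FinTree) => x.1.take k ∈ x.2 :=
    primrecRel_mem.comp (list_take.comp fst (fst.comp snd)) (snd.comp snd)
  have htake : PrimrecRel fun (τ : List ℕ) (T : FinTree) => ∀ k < τ.length + 1, τ.take k ∈ T :=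
    ((PrimrecRel.forall_mem_list hmem).comp (list_range.comp (succ.comp (list_length.comp fst)))
      (pair fst snd)).of_eq fun _ => by simp only [List.mem_range]
  refine (((PrimrecRel.forall_mem_list primrecRel_mem).comp fst snd).and
    (((PrimrecRel.forall_mem_list htake).comp snd snd).and
      ((PrimrecRel.forall_mem_list hnode).comp snd .id))).of_eq fun x => ?_
  simp only [← isTree_iff_forall_take, or_iff_not_imp_left]
  exact ⟨fun ⟨h₁, h₂, h₃⟩ => ⟨h₁, h₂, h₃⟩, fun ⟨h₁, h₂, h₃⟩ => ⟨h₁, h₂, h₃⟩⟩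

theorem primrecRel_isWitness (p : FinTree) (e : ℕ) : PrimrecRel (IsWitness p e) := by
  have hevaln : Primrec fun x : ℕ × FinTree × ℕ × ℕ × ℕ =>
      (Denumerable.ofNat Code e).evaln x.2.2.2.2 (Nat.pair (Nat.pair x.1 x.2.2.2.1) x.2.2.1) :=
    Code.primrec_evaln.comp (pair (pair (snd.comp (snd.comp (snd.comp snd))) (const _))
      (Primrec₂.natPair.comp (Primrec₂.natPair.comp fst (fst.comp (snd.comp (snd.comp snd))))
        (fst.comp (snd.comp snd))))
  exact (primrecRel_legalExt.comp (const p) (fst.comp snd)).and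
    (((PrimrecRel.forall_mem_list primrecRel_mem_codes).comp
      ((Primrec.ofNat (List ℕ)).comp (fst.comp (snd.comp snd))) (fst.comp snd)).and
    (Primrec.eq.comp (option_isSome.comp hevaln) (const true)))

end Primrec

theorem computable_of_witness {β : Type} [Denumerable β] {f : ℕ → ℕ} {R : ℕ → β → Prop}
    (hR : PrimrecRel R) {g : β → ℕ} (hg : Primrec g) (hex : ∀ n, ∃ b, R n b)
    (hsound : ∀ n b, R n b → g b = f n) : Computable f := by
  classical
  have hdec := Primrec.ofNat β
  have hsearch : Computable₂ fun n m =>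
      if R n (Denumerable.ofNat β m) then some (g (Denumerable.ofNat β m)) else none :=
    (Primrec.ite (hR.comp Primrec.fst (hdec.comp Primrec.snd))
      (Primrec.option_some.comp (hg.comp (hdec.comp Primrec.snd))) (Primrec.const none)).to_comp
  refine (Partrec.rfindOpt hsearch).of_eq_tot fun n => ?_
  obtain ⟨b, hb⟩ := hex n
  have hdom : (Nat.rfindOpt fun m =>
      if R n (Denumerable.ofNat β m) then some (g (Denumerable.ofNat β m)) else none).Dom :=
    Nat.rfindOpt_dom.mpr ⟨Encodable.encode b, g b, by simp [hb]⟩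
  obtain ⟨m, hm⟩ := Nat.rfindOpt_spec (Part.get_mem hdom)
  split_ifs at hm with hRm
  · rw [Option.mem_def, Option.some_inj, hsound n _ hRm] at hm
    exact hm ▸ Part.get_mem hdom
  · exact absurd hm (Option.not_mem_none _)

theorem computable_of_legalExt {p : FinTree} {e : ℕ} {f : ℕ → ℕ}
    (hex : ∀ n, ∃ L, LegalExt p L ∧ Nat.pair n (f n) ∈ enumOpApply e (codeTree {σ | σ ∈ L}))
    (huniq : ∀ L n y, LegalExt p L → Nat.pair n y ∈ enumOpApply e (codeTree {σ | σ ∈ L}) →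
      y = f n) : Computable f := by
  refine computable_of_witness (primrecRel_isWitness p e) (g := fun w => w.2.2.1)
    (Primrec.fst.comp (Primrec.snd.comp Primrec.snd)) (fun n => ?_) fun n w hw => ?_
  · obtain ⟨L, hL⟩ := hex n
    obtain ⟨u, k, hw⟩ := exists_isWitness_iff.mpr hL
    exact ⟨_, hw⟩
  · obtain ⟨hL, hy⟩ := exists_isWitness_iff.mp ⟨w.2.1, w.2.2.2, hw⟩
    exact huniq w.1 n _ hL hy

theorem labels_singleton_pair (j : ℕ) : labels [Nat.pair j 0] = [0] := by
  simp [labels]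

open Classical in
/-- The trailing entry, labelled `0 = encode []`, makes every leaf of `p` grow even when its
backlog is empty. -/
noncomputable def extendLeaves (p T : FinTree) : FinTree :=
  T ++ (p.filter (IsLeafOf p ·)).flatMap fun ℓ => chain ℓ (block p ℓ ++ [Nat.pair 0 0])

theorem LegalExt.extendLeaves {p T : FinTree} (hnil : [] ∈ p) (h : LegalExt p T) :
    LegalExt p (extendLeaves p T) := by
  classical
  suffices ∀ L : FinTree, (∀ ℓ ∈ L, ℓ ∈ p ∧ IsLeafOf p ℓ) → ∀ T, LegalExt p T →
      LegalExt p (T ++ L.flatMap fun ℓ => chain ℓ (block p ℓ ++ [Nat.pair 0 0])) from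
    this _ (fun ℓ hℓ => by simpa using hℓ) T h
  intro L
  induction L with
  | nil => simp
  | cons a L ih =>
    intro hL T hT
    rw [List.flatMap_cons, ← List.append_assoc]
    refine ih (fun ℓ hℓ => hL ℓ (List.mem_cons_of_mem _ hℓ)) _ ?_
    refine hT.append_chain (hL a List.mem_cons_self).1 (hL a List.mem_cons_self).2 ?_
    simpa [labels_singleton_pair] using zero_mem_codes hnil

theorem not_isLeafOf_extendLeaves {p T : FinTree} {ℓ : List ℕ} (hℓ : ℓ ∈ p)
    (hleaf : IsLeafOf p ℓ) : ¬IsLeafOf (extendLeaves p T) ℓ := by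
  classical
  refine not_isLeafOf_of_mem_chain (ent := block p ℓ ++ [Nat.pair 0 0]) (by simp) fun σ hσ => ?_
  exact List.mem_append_right _ (List.mem_flatMap.mpr ⟨ℓ, by simpa using ⟨hℓ, hleaf⟩, hσ⟩)

theorem subset_extendLeaves (p : FinTree) {T : FinTree} : ∀ σ ∈ T, σ ∈ extendLeaves p T :=
  fun _ => List.mem_append_left _

noncomputable def someLeaf (p : FinTree) : List ℕ :=
  Classical.epsilon fun ℓ => ℓ ∈ p ∧ IsLeafOf p ℓ

theorem someLeaf_spec {p : FinTree} (hnil : [] ∈ p) :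
    someLeaf p ∈ p ∧ IsLeafOf p (someLeaf p) := by
  refine Classical.epsilon_spec (p := fun ℓ => ℓ ∈ p ∧ IsLeafOf p ℓ) ?_
  obtain ⟨ℓ, hℓ, hmax⟩ :=
    Set.exists_max_image {σ | σ ∈ p} List.length (List.finite_toSet p) ⟨[], hnil⟩
  exact ⟨ℓ, hℓ, fun τ hτ h => (h.eq_of_length_le (hmax τ hτ)).symm⟩

noncomputable def diagNode (p : FinTree) : List ℕ := someLeaf p ++ block p (someLeaf p)

open Classical in
noncomputable def diagonalize (c : Code) (p : FinTree) : FinTree :=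
  if h : ∃ j, ¬(c.eval (Encodable.encode (diagNode p ++ [Nat.pair j 0]))).Dom then
    p ++ chain (someLeaf p) (block p (someLeaf p) ++ [Nat.pair h.choose 0])
  else p

theorem legalExt_diagonalize (c : Code) {p : FinTree} (hp : IsFiniteTree p) :
    LegalExt p (diagonalize c p) := by
  unfold diagonalize
  split
  · refine (LegalExt.refl hp.isTree).append_chain (someLeaf_spec hp.nil_mem).1
      (someLeaf_spec hp.nil_mem).2 ?_
    simpa [labels_singleton_pair] using zero_mem_codes hp.nil_mem
  · exact LegalExt.refl hp.isTree

theorem diagNode_append_mem_diagonalize {c : Code} {p : FinTree}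
    (h : ∃ j, ¬(c.eval (Encodable.encode (diagNode p ++ [Nat.pair j 0]))).Dom) :
    diagNode p ++ [Nat.pair h.choose 0] ∈ diagonalize c p := by
  rw [diagonalize, dif_pos h]
  exact List.mem_append_right _
    (mem_chain.mpr ⟨_, List.prefix_refl _, by simp [diagNode]⟩)

def IsSplitting (e : ℕ) (p L : FinTree) : Prop :=
  LegalExt p L ∧ ∃ n y y', y ≠ y' ∧ Nat.pair n y ∈ enumOpApply e (codeTree {σ | σ ∈ L}) ∧
    Nat.pair n y' ∈ enumOpApply e (codeTree {σ | σ ∈ L})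

open Classical in
noncomputable def seekSplitting (e : ℕ) (p : FinTree) : FinTree :=
  if h : ∃ L, IsSplitting e p L then h.choose else p

theorem legalExt_seekSplitting (e : ℕ) {p : FinTree} (hp : IsFiniteTree p) :
    LegalExt p (seekSplitting e p) := by
  unfold seekSplitting
  split
  · next h => exact h.choose_spec.1
  · exact LegalExt.refl hp.isTree

noncomputable def requirement : Code ⊕ ℕ → FinTree → FinTree
  | .inl c => diagonalize c
  | .inr e => seekSplitting e

noncomputable def stage : ℕ → FinTree
  | 0 => [[]]
  | s + 1 => extendLeaves (stage s) (requirement (Denumerable.ofNat (Code ⊕ ℕ) s) (stage s))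

theorem stage_encode_succ (r : Code ⊕ ℕ) :
    stage (Encodable.encode r + 1) =
      extendLeaves (stage (Encodable.encode r)) (requirement r (stage (Encodable.encode r))) := by
  rw [stage, Denumerable.ofNat_encode]

theorem legalExt_extendLeaves_requirement (r : Code ⊕ ℕ) {p : FinTree} (hp : IsFiniteTree p) :
    LegalExt p (extendLeaves p (requirement r p)) := by
  refine LegalExt.extendLeaves hp.nil_mem ?_
  cases r with
  | inl c => exact legalExt_diagonalize c hp
  | inr e => exact legalExt_seekSplitting e hp

theorem isFiniteTree_stage : ∀ s, IsFiniteTree (stage s)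
  | 0 => ⟨List.mem_singleton_self _, fun _ _ h hτ =>
      List.mem_singleton.mpr (List.prefix_nil.mp (List.mem_singleton.mp hτ ▸ h))⟩
  | s + 1 => (legalExt_extendLeaves_requirement _ (isFiniteTree_stage s)).isFiniteTree
      (isFiniteTree_stage s)

theorem legalExt_stage_succ (s : ℕ) : LegalExt (stage s) (stage (s + 1)) :=
  legalExt_extendLeaves_requirement _ (isFiniteTree_stage s)

theorem not_isLeafOf_stage_succ {s : ℕ} {σ : List ℕ} (hσ : σ ∈ stage s) :
    ¬IsLeafOf (stage (s + 1)) σ := by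
  by_cases hleaf : IsLeafOf (stage s) σ
  · exact not_isLeafOf_extendLeaves hσ hleaf
  · exact fun h => hleaf (h.anti (legalExt_stage_succ s).subset)

theorem legalExt_stage {s t : ℕ} (h : s ≤ t) : LegalExt (stage s) (stage t) := by
  obtain ⟨k, rfl⟩ := Nat.exists_eq_add_of_le h
  induction k generalizing s with
  | zero => exact LegalExt.refl (isFiniteTree_stage s).isTree
  | succ k ih =>
    rw [show s + (k + 1) = s + 1 + k by omega]
    exact (legalExt_stage_succ s).trans (isFiniteTree_stage s).nil_mem
      (ih (Nat.le_add_right _ _)) fun ℓ hℓ _ => not_isLeafOf_stage_succ hℓ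

def tree : Set (List ℕ) := ⋃ s, {σ | σ ∈ stage s}

theorem mem_tree {σ : List ℕ} : σ ∈ tree ↔ ∃ s, σ ∈ stage s := Set.mem_iUnion

theorem stage_subset {s t : ℕ} (h : s ≤ t) : ∀ σ ∈ stage s, σ ∈ stage t :=
  (legalExt_stage h).subset

theorem exists_stage_ge_of_mem_tree {σ : List ℕ} (hσ : σ ∈ tree) (s : ℕ) :
    ∃ t, s ≤ t ∧ σ ∈ stage t := by
  obtain ⟨t, ht⟩ := mem_tree.mp hσ
  exact ⟨max s t, le_max_left _ _, stage_subset (le_max_right _ _) σ ht⟩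

theorem isTree_tree : IsTree tree := fun σ τ h hτ => by
  obtain ⟨s, hs⟩ := mem_tree.mp hτ
  exact mem_tree.mpr ⟨s, (isFiniteTree_stage s).isTree h hs⟩

theorem noLeaves_tree : NoLeaves tree := fun σ hσ hleaf => by
  obtain ⟨s, hs⟩ := mem_tree.mp hσ
  exact not_isLeafOf_stage_succ hs fun τ hτ h => hleaf.2 τ (mem_tree.mpr ⟨s + 1, hτ⟩) h

theorem append_singleton_mem_stage_succ {s : ℕ} {σ : List ℕ} {x : ℕ} (hσ : σ ∈ stage s)
    (hx : σ ++ [x] ∈ tree) : σ ++ [x] ∈ stage (s + 1) := by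
  obtain ⟨t, ht, hxt⟩ := exists_stage_ge_of_mem_tree hx (s + 1)
  exact (legalExt_stage ht).append_singleton_mem (stage_subset (Nat.le_succ s) σ hσ)
    (not_isLeafOf_stage_succ hσ) hxt

theorem finBranching_tree : FinBranching tree := fun σ hσ => by
  obtain ⟨s, hs⟩ := mem_tree.mp hσ
  refine ((List.finite_toSet (stage (s + 1))).preimage ?_).subset
    fun x hx => append_singleton_mem_stage_succ hs hx
  exact fun x _ y _ h => List.singleton_injective (List.append_cancel_left h)

theorem labels_subset_codes_stage :
    ∀ s, ∀ σ ∈ stage s, ∀ x ∈ labels σ, x ∈ codes (stage s)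
  | 0 => by simp [stage, labels]
  | s + 1 => (legalExt_stage_succ s).labels_subset_codes (isFiniteTree_stage s).nil_mem
      (labels_subset_codes_stage s)

theorem range_labels_eq_codeTree {v : ℕ → ℕ} (hv : v ∈ Paths tree) :
    (Set.range fun n => (v n).unpair.2) = codeTree tree := by
  ext x
  constructor
  · rintro ⟨n, rfl⟩
    obtain ⟨t, -, ht⟩ := exists_stage_ge_of_mem_tree (hv (n + 1)) 0
    have hmem : (v n).unpair.2 ∈ labels (initSeg v (n + 1)) := by
      simp only [labels, initSeg, List.map_map, List.mem_map, List.mem_range]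
      exact ⟨n, Nat.lt_succ_self n, rfl⟩
    obtain ⟨σ, hσ, hσx⟩ := List.mem_map.mp (labels_subset_codes_stage t _ ht _ hmem)
    exact ⟨σ, mem_tree.mpr ⟨t, hσ⟩, hσx⟩
  · rintro ⟨σ, hσ, rfl⟩
    obtain ⟨s, hs⟩ := mem_tree.mp hσ
    refine exists_label_eq_of_legalExt (isFiniteTree_stage s).nil_mem (fun n => ?_)
      (List.mem_map.mpr ⟨σ, hs, rfl⟩)
    obtain ⟨t, hst, ht⟩ := exists_stage_ge_of_mem_tree (hv n) s
    exact ⟨_, legalExt_stage hst, ht⟩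

theorem mem_codeTree_tree_iff {c : Code} (hc : codeTree tree = {x | (c.eval x).Dom})
    (σ : List ℕ) : σ ∈ tree ↔ (c.eval (Encodable.encode σ)).Dom := by
  rw [← Encodable.encode_injective.mem_set_image]
  exact Set.ext_iff.mp hc _

theorem not_reSet_codeTree_tree : ¬REset (codeTree tree) := by
  rintro ⟨c, hc⟩
  set p := stage (Encodable.encode (Sum.inl c : Code ⊕ ℕ))
  by_cases h : ∃ j, ¬(c.eval (Encodable.encode (diagNode p ++ [Nat.pair j 0]))).Dom
  · refine h.choose_spec ((mem_codeTree_tree_iff hc _).mp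
      (mem_tree.mpr ⟨Encodable.encode (Sum.inl c : Code ⊕ ℕ) + 1, ?_⟩))
    rw [stage_encode_succ]
    exact subset_extendLeaves _ _ (diagNode_append_mem_diagonalize h)
  · simp only [not_exists, not_not] at h
    have hmem : ∀ j, diagNode p ++ [Nat.pair j 0] ∈ tree :=
      fun j => (mem_codeTree_tree_iff hc _).mpr (h j)
    exact Set.infinite_of_injective_forall_mem (fun j k hjk => (Nat.pair_eq_pair.mp hjk).1)
      hmem (finBranching_tree _ (isTree_tree (List.prefix_append _ _) (hmem 0)))

theorem monotone_codeTree_stage : Monotone fun s => codeTree {σ | σ ∈ stage s} :=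
  fun _ _ h => Set.image_mono (stage_subset h)

theorem codeTree_tree : codeTree tree = ⋃ s, codeTree {σ | σ ∈ stage s} :=
  Set.image_iUnion

theorem computable_of_enumLE_codeTree_tree {f : ℕ → ℕ}
    (hf : EnumLE (graphSet f) (codeTree tree)) : Computable f := by
  obtain ⟨e, he⟩ := hf
  set s := Encodable.encode (Sum.inr e : Code ⊕ ℕ)
  have hgraph : ∀ {n y}, Nat.pair n y ∈ enumOpApply e (codeTree tree) → y = f n := by
    intro n y hny
    rw [he] at hny
    obtain ⟨m, hm⟩ := hny
    obtain ⟨rfl, rfl⟩ := Nat.pair_eq_pair.mp hm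
    rfl
  have hsub : ∀ {L L' : FinTree}, (∀ σ ∈ L, σ ∈ L') →
      enumOpApply e (codeTree {σ | σ ∈ L}) ⊆ enumOpApply e (codeTree {σ | σ ∈ L'}) :=
    fun h => enumOpApply_mono e (Set.image_mono h)
  have hnosplit : ¬∃ L, IsSplitting e (stage s) L := by
    intro h
    have hL : codeTree {σ | σ ∈ h.choose} ⊆ codeTree tree := Set.image_mono fun σ hσ => by
      refine mem_tree.mpr ⟨s + 1, ?_⟩
      rw [stage_encode_succ]
      refine subset_extendLeaves _ _ ?_
      rwa [requirement, seekSplitting, dif_pos h]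
    obtain ⟨-, n, y, y', hne, hy, hy'⟩ := h.choose_spec
    exact hne ((hgraph (enumOpApply_mono e hL hy)).trans (hgraph (enumOpApply_mono e hL hy')).symm)
  have hex : ∀ n, ∃ t, s ≤ t ∧
      Nat.pair n (f n) ∈ enumOpApply e (codeTree {σ | σ ∈ stage t}) := by
    intro n
    have hn : Nat.pair n (f n) ∈ enumOpApply e (⋃ t, codeTree {σ | σ ∈ stage t}) := by
      rw [← codeTree_tree, he]
      exact ⟨n, rfl⟩
    obtain ⟨t, ht⟩ := exists_mem_enumOpApply_of_mem_iUnion monotone_codeTree_stage hn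
    exact ⟨max s t, le_max_left _ _, hsub (stage_subset (le_max_right _ _)) ht⟩
  refine computable_of_legalExt (p := stage s) (e := e) (fun n => ?_) fun L n y hL hy => ?_
  · obtain ⟨t, hst, ht⟩ := hex n
    exact ⟨_, legalExt_stage hst, ht⟩
  · obtain ⟨t, hst, ht⟩ := hex n
    by_contra hne
    exact hnosplit ⟨L ++ stage t, hL.append (legalExt_stage hst), n, y, f n, hne,
      hsub (fun _ => List.mem_append_left _) hy, hsub (fun _ => List.mem_append_right _) ht⟩

end EPointedTree

open EPointedTree

/-- There is a finitely branching tree `A ⊆ ω^{<ω}` with no leaves that is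
quasiminimal (coded as a subset of `ω`) and satisfies `ran(π₁ ∘ f) = A` for
every `f ∈ [A]`; in particular `A` is uniformly e-pointed w.r.t. functions. -/
theorem stmt16 :
    ∃ A : Set (List ℕ), IsTree A ∧ FinBranching A ∧ NoLeaves A ∧
      Quasiminimal (codeTree A) ∧
      (∀ f ∈ Paths A, (Set.range fun n => (f n).unpair.2) = codeTree A) ∧
      UEPfun A := by
  obtain ⟨e, he⟩ := exists_enumOpApply_eq_image (h := fun w => w.unpair.2.unpair.2)
    (Primrec.snd.comp (Primrec.unpair.comp (Primrec.snd.comp Primrec.unpair)))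
  refine ⟨tree, isTree_tree, finBranching_tree, noLeaves_tree,
    ⟨not_reSet_codeTree_tree, fun f => computable_of_enumLE_codeTree_tree⟩,
    fun f hf => range_labels_eq_codeTree hf,
    isTree_tree, finBranching_tree, noLeaves_tree, e, fun g hg => ?_⟩
  rw [he, ← range_labels_eq_codeTree hg, graphSet, ← Set.range_comp]
  simp [Function.comp_def]
end

section
/- There is a set A ⊆ ω whose degree of enumerability 𝔈_A is both quasiminimal and compact. Hence 𝔈_A is closed, nonzero, and does not bound any nonzero degree of solvability: {f} ≰_s E_A for every nonrecursive total f. -/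
/-!
Elements of the generic set `A` carry a level and a finite list of elements they claim to
be in `A`. A forcing condition fixes `A` on all levels below its height, and every element
added later claims everything already present. So each level `Sₙ` of `A` is finite and
nonempty, and `∏ Sₙ` is a compact mass problem equivalent to `E_A`: from an enumeration of
`A` pick the first element of each level; from `h ∈ ∏ Sₙ` enumerate the `h n` together with
their claims, which exhaust `A` since every element is claimed by all elements of high
enough level.

Genericity makes `A` non-r.e. (diagonalize at a fresh level) and quasiminimal: if
`graph f = Ψₑ(A)`, some stage either forces `Ψₑ(A)` to be multivalued, which is impossible,
or has no extension on which `Ψₑ` splits; then `f n` is the `y` such that `⟨n, y⟩` is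
enumerated from some extension of that stage, a Σ₁ search. Finally `{f} ≤ₛ E_A` gives
`graph f ≤ₑ A`, because every finite subset of `A` is an initial segment of an enumeration
of `A`.
-/

open Nat.Partrec (Code)

namespace TuringFunctional

lemma map_range_prefix (g : ℕ → ℕ) {a b : ℕ} (h : a ≤ b) :
    (List.range a).map g <+: (List.range b).map g := by
  refine List.IsPrefix.map g ?_
  rw [List.prefix_iff_eq_take, List.length_range, List.take_range, min_eq_left h]

lemma Total.eq_of_mem {Φ : TuringFunctional} {g f : ℕ → ℕ} (hT : Φ.Total g f)
    {σ : List ℕ} (hσ : strPrefix σ g) {n y : ℕ} (hy : y ∈ Φ.app (σ, n)) : y = f n := by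
  obtain ⟨k, hk⟩ := hT n
  rw [strPrefix] at hσ
  have hσ' : σ <+: (List.range (max k σ.length)).map g := by
    simpa only [hσ] using map_range_prefix g (le_max_right k σ.length)
  exact Part.mem_unique (Φ.mono hσ' hy) (Φ.mono (map_range_prefix g (le_max_left _ _)) hk)

def ofQuery (q : ℕ → ℕ) (φ : ℕ → ℕ → ℕ) (hq : Computable q) (hφ : Computable₂ φ) :
    TuringFunctional where
  app s := Part.ofOption ((s.1[q s.2]?).map (φ s.2))
  partrec := Computable.ofOption <| Computable.option_map
    (Computable.list_getElem?.comp Computable.fst (hq.comp Computable.snd))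
    (hφ.comp (Computable.snd.comp Computable.fst) Computable.snd).to₂
  mono {σ τ n y} h hy := by
    simp only [Part.mem_ofOption, Option.mem_def, Option.map_eq_some_iff,
      List.getElem?_eq_some_iff] at hy ⊢
    obtain ⟨a, ⟨hlt, rfl⟩, rfl⟩ := hy
    exact ⟨_, ⟨lt_of_lt_of_le hlt h.length_le, (h.getElem hlt).symm⟩, rfl⟩

lemma ofQuery_total {q : ℕ → ℕ} {φ : ℕ → ℕ → ℕ} (hq : Computable q) (hφ : Computable₂ φ)
    (g : ℕ → ℕ) : (ofQuery q φ hq hφ).Total g fun n => φ n (g (q n)) := fun n =>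
  ⟨q n + 1, by simp [ofQuery]⟩

def firstWith (P : ℕ → ℕ → Bool) (hP : Primrec₂ P) : TuringFunctional where
  app s := Part.ofOption s.1[s.1.findIdx (P s.2)]?
  partrec := Computable.ofOption <| Primrec.to_comp <| Primrec.list_getElem?.comp Primrec.fst <|
    Primrec.list_findIdx Primrec.fst (hP.comp (Primrec.snd.comp Primrec.fst) Primrec.snd)
  mono {σ τ n y} h hy := by
    simp only [Part.mem_ofOption, Option.mem_def, List.getElem?_eq_some_iff] at hy ⊢
    obtain ⟨hlt, rfl⟩ := hy
    rw [h.findIdx_eq_of_findIdx_lt_length hlt]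
    exact ⟨lt_of_lt_of_le hlt h.length_le, (h.getElem hlt).symm⟩

lemma firstWith_total {P : ℕ → ℕ → Bool} (hP : Primrec₂ P) {g : ℕ → ℕ}
    (hg : ∀ n, ∃ k, P n (g k)) : (firstWith P hP).Total g fun n => g (Nat.find (hg n)) := by
  classical
  intro n
  refine ⟨Nat.find (hg n) + 1, ?_⟩
  have hidx : ((List.range (Nat.find (hg n) + 1)).map g).findIdx (P n) = Nat.find (hg n) := by
    rw [List.findIdx_eq (by simp)]
    simp only [List.getElem_map, List.getElem_range]
    exact ⟨Nat.find_spec (hg n), fun j hj => by simpa using Nat.find_min (hg n) hj⟩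
  simp [firstWith, hidx]

end TuringFunctional

lemma medvedevLE_refl (X : Set (ℕ → ℕ)) : MedvedevLE X X :=
  ⟨.ofQuery id (fun _ x => x) Computable.id Computable.snd,
    fun g hg => ⟨g, TuringFunctional.ofQuery_total _ _ g, hg⟩⟩

lemma pair_mem_graphSet {f : ℕ → ℕ} {n y : ℕ} : Nat.pair n y ∈ graphSet f ↔ y = f n := by
  constructor
  · rintro ⟨k, hk⟩
    have := congrArg Nat.unpair hk
    simp only [Nat.unpair_pair, Prod.mk.injEq] at this
    obtain ⟨rfl, rfl⟩ := this
    rfl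
  · rintro rfl
    exact ⟨n, rfl⟩

lemma enumOpApply_mono (e : ℕ) {B B' : Set ℕ} (h : B ⊆ B') :
    enumOpApply e B ⊆ enumOpApply e B' := fun _ ⟨u, hu, hsub⟩ =>
  ⟨u, hu, fun y hy => h (hsub y hy)⟩

lemma exists_enumOpApply_eq {R : ℕ → List ℕ → Prop} (hR : REPred fun p : ℕ × List ℕ => R p.1 p.2) :
    ∃ e, ∀ B, enumOpApply e B = {x | ∃ L : List ℕ, R x L ∧ ∀ y ∈ L, y ∈ B} := by
  have hpart : Partrec fun z : ℕ =>
      (Part.assert (R z.unpair.1 (Denumerable.ofNat (List ℕ) z.unpair.2))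
        fun _ => Part.some ()).map fun _ => 0 :=
    (hR.comp ((Computable.fst.comp Computable.unpair).pair
      ((Computable.ofNat (List ℕ)).comp (Computable.snd.comp Computable.unpair)))).map
      (Computable.const 0).to₂
  obtain ⟨c, hc⟩ := Code.exists_code.1 (Partrec.nat_iff.1 hpart)
  refine ⟨Encodable.encode c, fun B => Set.ext fun x => ?_⟩
  simp only [enumOpApply, Denumerable.ofNat_encode, hc, Nat.unpair_pair, Part.map_Dom,
    Part.assert]
  constructor
  · rintro ⟨u, ⟨hR, -⟩, hsub⟩
    exact ⟨_, hR, hsub⟩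
  · rintro ⟨L, hR, hsub⟩
    exact ⟨Encodable.encode L, ⟨by simpa using hR, trivial⟩, by simpa using hsub⟩

lemma REset_of_REPred {A : Set ℕ} (h : REPred (· ∈ A)) : REset A := by
  obtain ⟨c, hc⟩ := Code.exists_code.1 (Partrec.nat_iff.1 (h.map (Computable.const 0).to₂))
  exact ⟨c, Set.ext fun x => by simp [hc, Part.assert]⟩

lemma REset_range_of_computable {g : ℕ → ℕ} (hg : Computable g) : REset (Set.range g) := by
  refine REset_of_REPred (REPred.of_eq (Partrec.dom_re (Partrec.rfind (p := fun x =>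
    (fun k => Part.some (decide (g k = x)) : ℕ →. Bool)) ?_)) fun x => ?_)
  · exact ((Primrec.eq.decide.to_comp.comp (hg.comp Computable.snd) Computable.fst).partrec).to₂
  · exact Nat.rfind_dom.trans (by simp [eq_comm])

lemma exists_mem_EProb_strPrefix {A : Set ℕ} (hA : A.Nonempty) {σ : List ℕ}
    (hσ : ∀ y ∈ σ, y ∈ A) : ∃ g ∈ EProb A, strPrefix σ g := by
  classical
  obtain ⟨a, ha⟩ := hA
  refine ⟨fun n => if h : n < σ.length then σ[n]
    else if n - σ.length ∈ A then n - σ.length else a, Set.ext fun x => ⟨?_, fun hx => ?_⟩, ?_⟩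
  · rintro ⟨n, rfl⟩
    dsimp only
    split_ifs with h₁ h₂
    exacts [hσ _ (List.getElem_mem h₁), h₂, ha]
  · exact ⟨x + σ.length, by simp [hx]⟩
  · exact List.ext_getElem (by simp) fun i h₁ h₂ => by simp_all

lemma enumLE_graphSet_of_medvedevLE {A : Set ℕ} (hA : A.Nonempty) {f : ℕ → ℕ}
    (h : MedvedevLE {f} (EProb A)) : EnumLE (graphSet f) A := by
  obtain ⟨Φ, hΦ⟩ := h
  have hR : REPred fun p : ℕ × List ℕ => p.1.unpair.2 ∈ Φ.app (p.2, p.1.unpair.1) := by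
    have hpart : Partrec fun p : ℕ × List ℕ => (Φ.app (p.2, p.1.unpair.1)).bind
        fun y => Part.ofOption (if y = p.1.unpair.2 then some () else none) :=
      (Φ.partrec.comp (Computable.snd.pair
        (Computable.fst.comp (Computable.unpair.comp Computable.fst)))).bind
        (Computable.ofOption (Primrec.ite (Primrec.eq.comp Primrec.snd
          (Primrec.snd.comp (Primrec.unpair.comp (Primrec.fst.comp Primrec.fst))))
          (Primrec.const _) (Primrec.const _)).to_comp).to₂
    refine (Partrec.dom_re hpart).of_eq fun p => ?_
    simp [Part.dom_iff_mem]
  obtain ⟨e, he⟩ := exists_enumOpApply_eq (R := fun x L => x.unpair.2 ∈ Φ.app (L, x.unpair.1)) hR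
  refine ⟨e, (he A).trans (Set.ext fun x => ⟨?_, ?_⟩)⟩
  · rintro ⟨L, hL, hsub⟩
    obtain ⟨g, hg, hpre⟩ := exists_mem_EProb_strPrefix hA hsub
    obtain ⟨f', hT, rfl⟩ := hΦ g hg
    rw [← Nat.pair_unpair x]
    exact pair_mem_graphSet.2 (hT.eq_of_mem hpre hL)
  · rintro ⟨n, rfl⟩
    obtain ⟨g, hg, -⟩ := exists_mem_EProb_strPrefix hA (σ := []) (by simp)
    obtain ⟨f', hT, rfl⟩ := hΦ g hg
    obtain ⟨k, hk⟩ := hT n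
    refine ⟨(List.range k).map g, by simpa using hk, ?_⟩
    simp only [List.mem_map, List.mem_range, forall_exists_index, and_imp]
    rintro _ j - rfl
    exact hg ▸ ⟨j, rfl⟩

lemma computable_of_witness {α : Type*} [Denumerable α] {P : ℕ → α → Prop} (hP : PrimrecRel P)
    {out : α → ℕ} (hout : Computable out) {f : ℕ → ℕ} (hex : ∀ n, ∃ w, P n w)
    (hsound : ∀ n w, P n w → out w = f n) : Computable f := by
  classical
  have hex' : ∀ n, ∃ m, P n (Denumerable.ofNat α m) := fun n =>
    (hex n).imp' Encodable.encode fun w hw => by simpa using hw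
  have hdec : ComputablePred fun p : ℕ × ℕ => P p.1 (Denumerable.ofNat α p.2) :=
    (hP.comp Primrec.fst ((Primrec.ofNat α).comp Primrec.snd)).computablePred
  exact (hout.comp ((Computable.ofNat α).comp (Computable.find hdec hex'))).of_eq fun n =>
    hsound n _ (Nat.find_spec (hex' n))

lemma primrecRel_mem : PrimrecRel fun (z : ℕ) (L : List ℕ) => z ∈ L :=
  (PrimrecRel.exists_mem_list Primrec.eq).swap.of_eq fun _ _ => by simp

namespace ClaimForcing

def lvl (x : ℕ) : ℕ := x.unpair.1

def claims (x : ℕ) : List ℕ := Denumerable.ofNat (List ℕ) x.unpair.2.unpair.2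

/-- The tag `t` only serves to produce distinct fresh elements with equal level and claims. -/
def mkElem (n t : ℕ) (L : List ℕ) : ℕ := Nat.pair n (Nat.pair t (Encodable.encode L))

@[simp] lemma lvl_mkElem (n t : ℕ) (L : List ℕ) : lvl (mkElem n t L) = n := by
  simp [lvl, mkElem]

@[simp] lemma claims_mkElem (n t : ℕ) (L : List ℕ) : claims (mkElem n t L) = L := by
  simp [claims, mkElem]

lemma mkElem_eq_mkElem_iff {n t t' : ℕ} {L : List ℕ} : mkElem n t L = mkElem n t' L ↔ t = t' := by
  simp [mkElem]

lemma primrec_lvl : Primrec lvl := Primrec.fst.comp Primrec.unpair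

lemma primrec_claims : Primrec claims :=
  (Primrec.ofNat (List ℕ)).comp
    ((Primrec.snd.comp Primrec.unpair).comp (Primrec.snd.comp Primrec.unpair))

/-- A forcing condition: a finite part `elems` of the generic set which, for a valid condition,
is already all of it below level `height`. -/
structure Cond where
  elems : List ℕ
  height : ℕ

namespace Cond

structure Valid (p : Cond) : Prop where
  lvl_lt : ∀ x ∈ p.elems, lvl x < p.height
  claims_mem : ∀ x ∈ p.elems, ∀ z ∈ claims x, z ∈ p.elems
  exists_lvl : ∀ i < p.height, ∃ x ∈ p.elems, lvl x = i

structure Extends (q p : Cond) : Prop where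
  height_le : p.height ≤ q.height
  subset : ∀ x ∈ p.elems, x ∈ q.elems
  mem_of_lvl_lt : ∀ x ∈ q.elems, lvl x < p.height → x ∈ p.elems
  claims_of_not_mem : ∀ x ∈ q.elems, x ∉ p.elems → ∀ a ∈ p.elems, a ∈ claims x

lemma Extends.refl (p : Cond) : p.Extends p :=
  ⟨le_rfl, fun _ h => h, fun _ h _ => h, fun _ h h' => absurd h h'⟩

lemma Extends.trans {r q p : Cond} (hrq : r.Extends q) (hqp : q.Extends p) : r.Extends p where
  height_le := hqp.height_le.trans hrq.height_le
  subset x hx := hrq.subset x (hqp.subset x hx)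
  mem_of_lvl_lt x hx hlt :=
    hqp.mem_of_lvl_lt x (hrq.mem_of_lvl_lt x hx (hlt.trans_le hqp.height_le)) hlt
  claims_of_not_mem x hx hxp a ha := by
    by_cases hxq : x ∈ q.elems
    · exact hqp.claims_of_not_mem x hxq hxp a ha
    · exact hrq.claims_of_not_mem x hx hxq a (hqp.subset a ha)

def union (p q : Cond) : Cond := ⟨p.elems ++ q.elems, max p.height q.height⟩

lemma Valid.union {p q : Cond} (hp : p.Valid) (hq : q.Valid) : (p.union q).Valid where
  lvl_lt x hx := by
    rcases List.mem_append.1 hx with hx | hx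
    · exact (hp.lvl_lt x hx).trans_le (le_max_left _ _)
    · exact (hq.lvl_lt x hx).trans_le (le_max_right _ _)
  claims_mem x hx z hz := by
    rcases List.mem_append.1 hx with hx | hx
    · exact List.mem_append_left _ (hp.claims_mem x hx z hz)
    · exact List.mem_append_right _ (hq.claims_mem x hx z hz)
  exists_lvl i hi := by
    rcases lt_max_iff.1 hi with hi | hi
    · obtain ⟨x, hx, rfl⟩ := hp.exists_lvl i hi
      exact ⟨x, List.mem_append_left _ hx, rfl⟩
    · obtain ⟨x, hx, rfl⟩ := hq.exists_lvl i hi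
      exact ⟨x, List.mem_append_right _ hx, rfl⟩

lemma Extends.union {p q r : Cond} (hp : p.Extends r) (hq : q.Extends r) :
    (p.union q).Extends r where
  height_le := hp.height_le.trans (le_max_left _ _)
  subset x hx := List.mem_append_left _ (hp.subset x hx)
  mem_of_lvl_lt x hx := (List.mem_append.1 hx).elim (hp.mem_of_lvl_lt x) (hq.mem_of_lvl_lt x)
  claims_of_not_mem x hx :=
    (List.mem_append.1 hx).elim (hp.claims_of_not_mem x) (hq.claims_of_not_mem x)

def fresh (p : Cond) (t : ℕ) : ℕ := mkElem p.height t p.elems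

def addFresh (p : Cond) (t : ℕ) : Cond := ⟨p.fresh t :: p.elems, p.height + 1⟩

lemma Valid.fresh_not_mem {p : Cond} (hp : p.Valid) (t : ℕ) : p.fresh t ∉ p.elems :=
  fun h => (hp.lvl_lt _ h).ne (lvl_mkElem _ _ _)

lemma Valid.addFresh {p : Cond} (hp : p.Valid) (t : ℕ) : (p.addFresh t).Valid where
  lvl_lt x hx := by
    rcases List.mem_cons.1 hx with rfl | hx
    · exact (lvl_mkElem _ _ _).trans_lt (Nat.lt_succ_self _)
    · exact (hp.lvl_lt x hx).trans (Nat.lt_succ_self _)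
  claims_mem x hx z hz := by
    rcases List.mem_cons.1 hx with rfl | hx
    · exact List.mem_cons_of_mem _ (by simpa [fresh] using hz)
    · exact List.mem_cons_of_mem _ (hp.claims_mem x hx z hz)
  exists_lvl i hi := by
    rcases (Nat.lt_succ_iff_lt_or_eq.1 hi) with hi | rfl
    · obtain ⟨x, hx, rfl⟩ := hp.exists_lvl i hi
      exact ⟨x, List.mem_cons_of_mem _ hx, rfl⟩
    · exact ⟨p.fresh t, List.mem_cons_self, lvl_mkElem _ _ _⟩

lemma addFresh_extends (p : Cond) (t : ℕ) : (p.addFresh t).Extends p where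
  height_le := Nat.le_succ _
  subset x hx := List.mem_cons_of_mem _ hx
  mem_of_lvl_lt x hx hlt := by
    rcases List.mem_cons.1 hx with rfl | hx
    · simp [fresh] at hlt
    · exact hx
  claims_of_not_mem x hx hxp a ha := by
    rcases List.mem_cons.1 hx with rfl | hx
    · simpa [fresh] using ha
    · exact absurd hx hxp

def Splits (e : ℕ) (p : Cond) : Prop :=
  ∃ n y₁ y₂, y₁ ≠ y₂ ∧ Nat.pair n y₁ ∈ enumOpApply e {x | x ∈ p.elems} ∧
    Nat.pair n y₂ ∈ enumOpApply e {x | x ∈ p.elems}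

lemma Splits.mono {e : ℕ} {p q : Cond} (h : Splits e p) (hpq : ∀ x ∈ p.elems, x ∈ q.elems) :
    Splits e q := by
  obtain ⟨n, y₁, y₂, hne, h₁, h₂⟩ := h
  exact ⟨n, y₁, y₂, hne, enumOpApply_mono e hpq h₁, enumOpApply_mono e hpq h₂⟩

end Cond

open Cond

open scoped Classical in
noncomputable def diagonalize (c : Code) (p : Cond) : Cond :=
  p.addFresh (if (c.eval (p.fresh 0)).Dom then 1 else 0)

lemma Cond.Valid.exists_diagonalize {p : Cond} (hp : p.Valid) (c : Code) :
    ∃ x, lvl x < (diagonalize c p).height ∧ (x ∈ (diagonalize c p).elems ↔ ¬(c.eval x).Dom) := by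
  have hmem (t : ℕ) : p.fresh 0 ∈ (p.addFresh t).elems ↔ t = 0 := by
    rw [Cond.addFresh, List.mem_cons, or_iff_left (hp.fresh_not_mem 0), fresh, fresh,
      mkElem_eq_mkElem_iff, eq_comm]
  refine ⟨p.fresh 0, (lvl_mkElem _ _ _).trans_lt (Nat.lt_succ_self _), ?_⟩
  by_cases h : (c.eval (p.fresh 0)).Dom <;> simp [diagonalize, hmem, h]

open scoped Classical in
noncomputable def splitOrSeal (e : ℕ) (p : Cond) : Cond :=
  if h : ∃ r : Cond, r.Valid ∧ r.Extends p ∧ Splits e r then h.choose else p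

lemma Cond.Valid.splitOrSeal {p : Cond} (hp : p.Valid) (e : ℕ) :
    (splitOrSeal e p).Valid ∧ (splitOrSeal e p).Extends p := by
  unfold ClaimForcing.splitOrSeal
  split_ifs with h
  · exact ⟨h.choose_spec.1, h.choose_spec.2.1⟩
  · exact ⟨hp, .refl p⟩

lemma splits_splitOrSeal_or (e : ℕ) (p : Cond) :
    Splits e (splitOrSeal e p) ∨
      ∀ r : Cond, r.Valid → r.Extends (splitOrSeal e p) → ¬Splits e r := by
  unfold ClaimForcing.splitOrSeal
  split_ifs with h
  · exact .inl h.choose_spec.2.2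
  · exact .inr fun r hr hrp hs => h ⟨r, hr, hrp, hs⟩

noncomputable def stage : ℕ → Cond
  | 0 => ⟨[], 0⟩
  | i + 1 => diagonalize (Denumerable.ofNat Code i) (splitOrSeal i (stage i))

lemma stage_valid : ∀ i, (stage i).Valid
  | 0 => ⟨nofun, nofun, nofun⟩
  | i + 1 => ((stage_valid i).splitOrSeal i).1.addFresh _

lemma stage_succ_extends (i : ℕ) : (stage (i + 1)).Extends (stage i) :=
  (addFresh_extends _ _).trans ((stage_valid i).splitOrSeal i).2

lemma stage_mono {i j : ℕ} (h : i ≤ j) : (stage j).Extends (stage i) := by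
  induction h with
  | refl => exact .refl _
  | step _ ih => exact (stage_succ_extends _).trans ih

lemma le_height_stage : ∀ i, i ≤ (stage i).height
  | 0 => le_rfl
  | i + 1 => Nat.succ_le_succ <|
      (le_height_stage i).trans ((stage_valid i).splitOrSeal i).2.height_le

lemma stage_sealed (e : ℕ) : Splits e (stage (e + 1)) ∨
    ∀ r : Cond, r.Valid → r.Extends (stage (e + 1)) → ¬Splits e r :=
  (splits_splitOrSeal_or e (stage e)).imp (fun h => h.mono (addFresh_extends _ _).subset)
    fun h r hr hre => h r hr (hre.trans (addFresh_extends _ _))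

def genericSet : Set ℕ := {x | ∃ i, x ∈ (stage i).elems}

lemma mem_stage_of_lvl_lt {x i : ℕ} (hx : x ∈ genericSet) (hlt : lvl x < (stage i).height) :
    x ∈ (stage i).elems := by
  obtain ⟨j, hj⟩ := hx
  exact (stage_mono (le_max_left i j)).mem_of_lvl_lt x
    ((stage_mono (le_max_right i j)).subset x hj) hlt

lemma claims_subset {x : ℕ} (hx : x ∈ genericSet) : ∀ z ∈ claims x, z ∈ genericSet := by
  obtain ⟨i, hi⟩ := hx
  exact fun z hz => ⟨i, (stage_valid i).claims_mem x hi z hz⟩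

lemma exists_forall_mem_claims {a : ℕ} (ha : a ∈ genericSet) :
    ∃ d, ∀ x ∈ genericSet, d ≤ lvl x → a ∈ claims x := by
  obtain ⟨i, hi⟩ := ha
  refine ⟨(stage i).height, fun x ⟨j, hj⟩ hle => ?_⟩
  exact (stage_mono (le_max_left i j)).claims_of_not_mem x
    ((stage_mono (le_max_right i j)).subset x hj)
    (fun h => ((stage_valid i).lvl_lt x h).not_ge hle) a hi

lemma exists_stage_superset (L : List ℕ) (hL : ∀ z ∈ L, z ∈ genericSet) (i : ℕ) :
    ∃ j ≥ i, ∀ z ∈ L, z ∈ (stage j).elems := by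
  induction L with
  | nil => exact ⟨i, le_rfl, by simp⟩
  | cons a L ih =>
    obtain ⟨j, hij, hj⟩ := ih fun z hz => hL z (List.mem_cons_of_mem _ hz)
    obtain ⟨k, hk⟩ := hL a List.mem_cons_self
    refine ⟨max j k, le_max_of_le_left hij, ?_⟩
    simp only [List.mem_cons, forall_eq_or_imp]
    exact ⟨(stage_mono (le_max_right _ _)).subset a hk,
      fun z hz => (stage_mono (le_max_left _ _)).subset z (hj z hz)⟩

lemma not_REset_genericSet : ¬REset genericSet := by
  rintro ⟨c, hc⟩
  set i := Encodable.encode c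
  obtain ⟨x, hlt, hx⟩ :=
    ((stage_valid i).splitOrSeal i).1.exists_diagonalize (Denumerable.ofNat Code i)
  have hmem : x ∈ genericSet ↔ x ∈ (stage (i + 1)).elems :=
    ⟨fun h => mem_stage_of_lvl_lt h hlt, fun h => ⟨_, h⟩⟩
  rw [hc] at hmem
  simp only [stage, Denumerable.ofNat_encode, i] at hx hmem
  exact (iff_not_self (hmem.trans hx)).elim

def levelSet (n : ℕ) : Set ℕ := {x ∈ genericSet | lvl x = n}

lemma levelSet_finite (n : ℕ) : (levelSet n).Finite :=
  (stage (n + 1)).elems.finite_toSet.subset fun _ ⟨hx, hl⟩ =>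
    mem_stage_of_lvl_lt hx (hl ▸ le_height_stage (n + 1))

lemma levelSet_nonempty (n : ℕ) : (levelSet n).Nonempty := by
  obtain ⟨x, hx, hl⟩ := (stage_valid (n + 1)).exists_lvl n (le_height_stage _)
  exact ⟨x, ⟨_, hx⟩, hl⟩

lemma genericSet_nonempty : genericSet.Nonempty :=
  (levelSet_nonempty 0).mono fun _ h => h.1

def levelProblem : Set (ℕ → ℕ) := Set.univ.pi levelSet

lemma isCompact_levelProblem : IsCompact levelProblem :=
  isCompact_univ_pi fun n => (levelSet_finite n).isCompact

lemma levelProblem_le_EProb : MedvedevLE levelProblem (EProb genericSet) := by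
  classical
  have hP : Primrec₂ fun n x => lvl x == n :=
    (Primrec.beq.comp (primrec_lvl.comp Primrec.snd) Primrec.fst).to₂
  refine ⟨.firstWith _ hP, fun g hg => ?_⟩
  have hex : ∀ n, ∃ k, (lvl (g k) == n) = true := fun n => by
    obtain ⟨x, hx, hl⟩ := levelSet_nonempty n
    obtain ⟨k, rfl⟩ := hg.symm ▸ hx
    exact ⟨k, by simpa using hl⟩
  refine ⟨_, TuringFunctional.firstWith_total _ hex, fun n _ => ⟨hg ▸ ⟨_, rfl⟩, ?_⟩⟩
  simpa using Nat.find_spec (hex n)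

lemma EProb_le_levelProblem : MedvedevLE (EProb genericSet) levelProblem := by
  have hq : Computable fun p : ℕ => p.unpair.1 := Computable.fst.comp Computable.unpair
  have hφ : Computable₂ fun (p x : ℕ) => ((claims x)[p.unpair.2]?).getD x :=
    (Primrec.option_getD.comp (Primrec.list_getElem?.comp (primrec_claims.comp Primrec.snd)
      ((Primrec.snd.comp Primrec.unpair).comp Primrec.fst)) Primrec.snd).to_comp
  refine ⟨.ofQuery _ _ hq hφ, fun h hh => ⟨_, TuringFunctional.ofQuery_total hq hφ h, ?_⟩⟩
  have hmem (n : ℕ) : h n ∈ genericSet := (hh n trivial).1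
  ext a
  constructor
  · rintro ⟨p, rfl⟩
    dsimp only
    cases hc : (claims (h p.unpair.1))[p.unpair.2]? with
    | none => exact hmem _
    | some z => exact claims_subset (hmem _) z (List.mem_of_getElem? hc)
  · intro ha
    obtain ⟨d, hd⟩ := exists_forall_mem_claims ha
    obtain ⟨j, hj, hja⟩ := List.getElem_of_mem (hd (h d) (hmem d) (hh d trivial).2.ge)
    exact ⟨Nat.pair d j, by simp [hj, hja]⟩

lemma eq_of_mem_enumOpApply_of_sealed {e i : ℕ} {f : ℕ → ℕ}
    (hf : enumOpApply e genericSet = graphSet f)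
    (hsealed : ∀ r : Cond, r.Valid → r.Extends (stage i) → ¬Splits e r)
    {r : Cond} (hr : r.Valid) (hri : r.Extends (stage i)) {n y : ℕ}
    (h : Nat.pair n y ∈ enumOpApply e {x | x ∈ r.elems}) : y = f n := by
  obtain ⟨u, hu, hsub⟩ : Nat.pair n (f n) ∈ enumOpApply e genericSet :=
    hf ▸ pair_mem_graphSet.2 rfl
  obtain ⟨j, hij, hj⟩ := exists_stage_superset _ hsub i
  -- `r` together with a stage enumerating `⟨n, f n⟩` is a valid extension of `stage i`.
  by_contra hne
  refine hsealed _ (hr.union (stage_valid j)) (hri.union (stage_mono hij))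
    ⟨n, y, f n, hne, enumOpApply_mono e (fun x hx => List.mem_append_left _ hx) h, u, hu,
      fun z hz => List.mem_append_right _ (hj z hz)⟩

lemma primrecPred_valid : PrimrecPred fun p : List ℕ × ℕ => (Cond.mk p.1 p.2).Valid := by
  have h₁ : PrimrecPred fun p : List ℕ × ℕ => ∀ x ∈ p.1, lvl x < p.2 :=
    PrimrecRel.forall_mem_list (Primrec.nat_lt.comp (primrec_lvl.comp Primrec.fst) Primrec.snd)
  have h₂ : PrimrecPred fun p : List ℕ × ℕ => ∀ x ∈ p.1, ∀ z ∈ claims x, z ∈ p.1 :=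
    (PrimrecRel.forall_mem_list (R := fun x L => ∀ z ∈ claims x, z ∈ L)
      ((PrimrecRel.forall_mem_list primrecRel_mem).comp (primrec_claims.comp Primrec.fst)
        Primrec.snd)).comp Primrec.fst Primrec.fst
  have h₃ : PrimrecPred fun p : List ℕ × ℕ => ∀ i < p.2, ∃ x ∈ p.1, lvl x = i :=
    ((PrimrecRel.forall_mem_list (R := fun i (L : List ℕ) => ∃ x ∈ L, lvl x = i)
      (PrimrecRel.exists_mem_list (R := fun x i => lvl x = i)
        (Primrec.eq.comp (primrec_lvl.comp Primrec.fst) Primrec.snd)).swap).comp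
      (Primrec.list_range.comp Primrec.snd) Primrec.fst).of_eq fun _ => by simp
  exact (h₁.and (h₂.and h₃)).of_eq fun p =>
    ⟨fun ⟨h₁, h₂, h₃⟩ => ⟨h₁, h₂, h₃⟩, fun ⟨h₁, h₂, h₃⟩ => ⟨h₁, h₂, h₃⟩⟩

lemma primrecPred_extends (q : Cond) :
    PrimrecPred fun p : List ℕ × ℕ => (Cond.mk p.1 p.2).Extends q := by
  have hmem : PrimrecPred fun x => x ∈ q.elems := primrecRel_mem.comp .id (.const _)
  have h₁ : PrimrecPred fun p : List ℕ × ℕ => q.height ≤ p.2 :=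
    Primrec.nat_le.comp (.const _) Primrec.snd
  have h₂ : PrimrecPred fun p : List ℕ × ℕ => ∀ x ∈ q.elems, x ∈ p.1 :=
    (PrimrecRel.forall_mem_list primrecRel_mem).comp (.const _) Primrec.fst
  have h₃ : PrimrecPred fun p : List ℕ × ℕ => ∀ x ∈ p.1, lvl x < q.height → x ∈ q.elems :=
    (PrimrecPred.forall_mem_list (((Primrec.nat_lt.comp primrec_lvl (.const _)).not.or hmem).of_eq
      fun _ => imp_iff_not_or.symm)).comp Primrec.fst
  have h₄ : PrimrecPred fun p : List ℕ × ℕ =>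
      ∀ x ∈ p.1, x ∉ q.elems → ∀ a ∈ q.elems, a ∈ claims x :=
    (PrimrecPred.forall_mem_list ((hmem.or ((PrimrecRel.forall_mem_list primrecRel_mem).comp
      (.const _) primrec_claims)).of_eq fun _ => or_iff_not_imp_left)).comp Primrec.fst
  exact (h₁.and (h₂.and (h₃.and h₄))).of_eq fun p =>
    ⟨fun ⟨h₁, h₂, h₃, h₄⟩ => ⟨h₁, h₂, h₃, h₄⟩, fun ⟨h₁, h₂, h₃, h₄⟩ => ⟨h₁, h₂, h₃, h₄⟩⟩

/-- `w = ((F, k), y, u, s)` witnesses that `⟨n, y⟩` is enumerated by the `e`-th operator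
from the finite set coded by `u`, in `s` steps, and that this set lies in the valid
extension `⟨F, k⟩` of `q`. -/
def IsWitness (e : ℕ) (q : Cond) (n : ℕ) (w : (List ℕ × ℕ) × ℕ × ℕ × ℕ) : Prop :=
  (Cond.mk w.1.1 w.1.2).Valid ∧ (Cond.mk w.1.1 w.1.2).Extends q ∧
    (Code.evaln w.2.2.2 (Denumerable.ofNat Code e) (Nat.pair (Nat.pair n w.2.1) w.2.2.1)).isSome ∧
    ∀ z ∈ Denumerable.ofNat (List ℕ) w.2.2.1, z ∈ w.1.1

lemma primrecRel_isWitness (e : ℕ) (q : Cond) : PrimrecRel (IsWitness e q) := by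
  have hr : Primrec fun p : ℕ × (List ℕ × ℕ) × ℕ × ℕ × ℕ => p.2.1 := Primrec.fst.comp Primrec.snd
  have hy : Primrec fun p : ℕ × (List ℕ × ℕ) × ℕ × ℕ × ℕ => p.2.2.1 :=
    Primrec.fst.comp (Primrec.snd.comp Primrec.snd)
  have hu : Primrec fun p : ℕ × (List ℕ × ℕ) × ℕ × ℕ × ℕ => p.2.2.2.1 :=
    Primrec.fst.comp (Primrec.snd.comp (Primrec.snd.comp Primrec.snd))
  have hs : Primrec fun p : ℕ × (List ℕ × ℕ) × ℕ × ℕ × ℕ => p.2.2.2.2 :=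
    Primrec.snd.comp (Primrec.snd.comp (Primrec.snd.comp Primrec.snd))
  have hev : PrimrecPred fun p : ℕ × (List ℕ × ℕ) × ℕ × ℕ × ℕ =>
      (Code.evaln p.2.2.2.2 (Denumerable.ofNat Code e)
        (Nat.pair (Nat.pair p.1 p.2.2.1) p.2.2.2.1)).isSome = true :=
    Primrec.eq.comp (Primrec.option_isSome.comp (Code.primrec_evaln.comp
      ((hs.pair (.const _)).pair (Primrec₂.natPair.comp (Primrec₂.natPair.comp Primrec.fst hy)
        hu)))) (.const true)
  exact (primrecPred_valid.comp hr).and (((primrecPred_extends q).comp hr).and (hev.and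
    ((PrimrecRel.forall_mem_list primrecRel_mem).comp ((Primrec.ofNat (List ℕ)).comp hu)
      (Primrec.fst.comp hr))))

lemma computable_of_enumLE_genericSet {f : ℕ → ℕ} (h : EnumLE (graphSet f) genericSet) :
    Computable f := by
  obtain ⟨e, he⟩ := h
  rcases stage_sealed e with ⟨n, y₁, y₂, hne, h₁, h₂⟩ | hsealed
  · have hsub : {x | x ∈ (stage (e + 1)).elems} ⊆ genericSet := fun x hx => ⟨_, hx⟩
    exact absurd ((pair_mem_graphSet.1 (he ▸ enumOpApply_mono e hsub h₁)).trans
      (pair_mem_graphSet.1 (he ▸ enumOpApply_mono e hsub h₂)).symm) hne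
  refine computable_of_witness (primrecRel_isWitness e (stage (e + 1)))
    (Computable.fst.comp Computable.snd) (fun n => ?_) fun n w ⟨hr, hre, hs, hsub⟩ => ?_
  · obtain ⟨u, hu, hsub⟩ : Nat.pair n (f n) ∈ enumOpApply e genericSet :=
      he ▸ pair_mem_graphSet.2 rfl
    obtain ⟨j, hj, hjsub⟩ := exists_stage_superset _ hsub (e + 1)
    obtain ⟨s, hs⟩ := Code.evaln_complete.1 (Part.get_mem hu)
    exact ⟨(((stage j).elems, (stage j).height), f n, u, s), stage_valid j, stage_mono hj,
      Option.isSome_iff_exists.2 ⟨_, hs⟩, hjsub⟩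
  · obtain ⟨v, hv⟩ := Option.isSome_iff_exists.1 hs
    exact eq_of_mem_enumOpApply_of_sealed he hsealed hr hre
      ⟨w.2.2.1, Part.dom_iff_mem.2 ⟨v, Code.evaln_sound hv⟩, hsub⟩

lemma quasiminimal_genericSet : Quasiminimal genericSet :=
  ⟨not_REset_genericSet, fun _ => computable_of_enumLE_genericSet⟩

end ClaimForcing

open ClaimForcing

/-- There is a degree of enumerability `𝔈_A` that is both quasiminimal and
compact; hence it is closed, nonzero, and bounds no nonzero degree of
solvability. -/
theorem stmt17 :
    ∃ A : Set ℕ, A.Nonempty ∧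
      (∃ B : Set ℕ, Quasiminimal B ∧ MedvedevEquiv (EProb A) (EProb B)) ∧
      (∃ K : Set (ℕ → ℕ), IsCompact K ∧ MedvedevEquiv (EProb A) K) ∧
      (∃ C : Set (ℕ → ℕ), IsClosed C ∧ MedvedevEquiv (EProb A) C) ∧
      (¬ ∃ g ∈ EProb A, Computable g) ∧
      (∀ f : ℕ → ℕ, ¬ Computable f → ¬ MedvedevLE {f} (EProb A)) := by
  have hK : MedvedevEquiv (EProb genericSet) levelProblem :=
    ⟨EProb_le_levelProblem, levelProblem_le_EProb⟩
  refine ⟨genericSet, genericSet_nonempty,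
    ⟨_, quasiminimal_genericSet, medvedevLE_refl _, medvedevLE_refl _⟩,
    ⟨_, isCompact_levelProblem, hK⟩, ⟨_, isCompact_levelProblem.isClosed, hK⟩, ?_,
    fun f hf h => hf (computable_of_enumLE_genericSet
      (enumLE_graphSet_of_medvedevLE genericSet_nonempty h))⟩
  rintro ⟨g, hg, hgc⟩
  exact not_REset_genericSet (hg ▸ REset_range_of_computable hgc)
end

section
/- There is a nonzero degree of enumerability that does not bound any nonzero closed Medvedev degree: there is a set A ⊆ ω such that E_A has no recursive member, yet every closed C ⊆ ω^ω with C ≤_s E_A has a recursive member. -/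
/-! The set `A` is the left cut of a real, approximated by nested intervals with rational
endpoints that are shrunk twice at stage `e`. First, the midpoint `n` is put into `A` exactly when
`n ∉ W_e`, so `A` is not r.e. and has no recursive enumeration. Then, for the `e`-th functional `Φ`
and some `q` inside the interval: if for a list `σ` below `q` and an input `m` the functional `Φ`
diverges at `m` on every extension of `σ` below `q`, the interval is shrunk to lie above `σ` and end
at `q`, so `Φ` is partial on every enumeration of `A` extending `σ`. Otherwise the lower end is
raised to `q`. Every list below `q` is then an initial segment of an enumeration of `A`, and a
recursive search for convergent extensions below `q` computes a function each of whose initial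
segments is an initial segment of `Φ(g)` for some `g ∈ E_A`; if `Φ` reduces a closed `C` to `E_A`,
this recursive function lies in `C`. -/

open Nat.Partrec (Code)
open Nat.Partrec.Code Encodable

theorem Computable.nat_find {α : Type*} [Primcodable α] {p : α → ℕ → Bool}
    (hp : Computable₂ p) (h : ∀ a, ∃ n, p a n = true) : Computable fun a => Nat.find (h a) :=
  (Partrec.rfind (hp.comp Computable.fst Computable.snd).partrec.to₂).of_eq fun a =>
    Part.eq_some_iff.2 <| Nat.mem_rfind.2
      ⟨by simpa using Nat.find_spec (h a), fun hm => by simpa using Nat.find_min (h a) hm⟩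

theorem Primrec.list_all {α : Type*} [Primcodable α] {p : α → Bool} (hp : Primrec p) :
    Primrec fun l : List α => l.all p := by
  refine (Primrec.list_foldr Primrec.id (Primrec.const true)
    ((Primrec.dom_bool₂ (· && ·)).comp (hp.comp (Primrec.fst.comp Primrec.snd))
      (Primrec.snd.comp Primrec.snd)).to₂).of_eq fun l => ?_
  induction l with
  | nil => rfl
  | cons a l ih => simp [← ih]

theorem Computable.exists_code_dom_eq_range {g : ℕ → ℕ} (hg : Computable g) :
    ∃ c : Code, {x | (c.eval x).Dom} = Set.range g := by
  have hsearch : Partrec fun x => Nat.rfind fun n => Part.some (decide (g n = x)) :=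
    Partrec.rfind ((Primrec.eq.decide.to_comp.comp (hg.comp Computable.snd)
      Computable.fst).partrec.to₂)
  obtain ⟨c, hc⟩ := exists_code.1 (Partrec.nat_iff.1 hsearch)
  refine ⟨c, Set.ext fun x => ?_⟩
  refine (congrArg Part.Dom (congrFun hc x)).to_iff.trans (Nat.rfind_dom.trans ?_)
  constructor
  · rintro ⟨n, hn, -⟩
    exact ⟨n, by simpa using hn⟩
  · rintro ⟨n, rfl⟩
    exact ⟨n, by simp, fun _ => trivial⟩

theorem List.map_range_prefix_of_le (g : ℕ → ℕ) {k K : ℕ} (h : k ≤ K) :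
    (List.range k).map g <+: (List.range K).map g := by
  simpa [← List.map_take, List.take_range, min_eq_left h] using
    List.take_prefix k ((List.range K).map g)

theorem Set.exists_range_eq_strPrefix {A : Set ℕ} (hA : A.Nonempty) {σ : List ℕ}
    (hσ : ∀ n ∈ σ, n ∈ A) : ∃ g : ℕ → ℕ, Set.range g = A ∧ strPrefix σ g := by
  obtain ⟨e, rfl⟩ := (Set.to_countable A).exists_eq_range hA
  refine ⟨fun i => if hi : i < σ.length then σ[i] else e (i - σ.length),
    Set.Subset.antisymm ?_ ?_, ?_⟩
  · rintro _ ⟨i, rfl⟩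
    by_cases hi : i < σ.length
    · simpa [hi] using hσ _ (List.getElem_mem hi)
    · simp [hi]
  · rintro _ ⟨j, rfl⟩
    exact ⟨j + σ.length, by simp⟩
  · refine List.ext_getElem (by simp) fun i hi _ => ?_
    simp_all

theorem IsClosed.mem_of_forall_exists_eqOn {C : Set (ℕ → ℕ)} (hC : IsClosed C) {h : ℕ → ℕ}
    (hM : ∀ M, ∃ f ∈ C, ∀ i < M, f i = h i) : h ∈ C := by
  choose f hfC hfh using hM
  refine hC.mem_of_tendsto (b := Filter.atTop) (tendsto_pi_nhds.2 fun i => ?_)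
    (Filter.Eventually.of_forall hfC)
  refine tendsto_const_nhds.congr' ?_
  filter_upwards [Filter.eventually_gt_atTop i] with M hM
  exact (hfh M i hM).symm

namespace TuringFunctional

theorem exists_code (Φ : TuringFunctional) :
    ∃ c : Code, ∀ a : List ℕ × ℕ, c.eval (encode a) = Φ.app a := by
  obtain ⟨c, hc⟩ := Nat.Partrec.Code.exists_code.1 Φ.partrec
  refine ⟨c, fun a => ?_⟩
  rw [hc]
  simp only [encodek]
  simpa using Part.map_id' encode_nat (Φ.app a)

theorem Total.exists_mem_app_ge {Φ : TuringFunctional} {g f : ℕ → ℕ} (hf : Φ.Total g f)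
    (n K₀ : ℕ) : ∃ K ≥ K₀, f n ∈ Φ.app ((List.range K).map g, n) := by
  obtain ⟨k, hk⟩ := hf n
  exact ⟨max k K₀, le_max_right _ _, Φ.mono (List.map_range_prefix_of_le g (le_max_left _ _)) hk⟩

theorem Total.eq_of_mem_app {Φ : TuringFunctional} {g f : ℕ → ℕ} (hf : Φ.Total g f)
    {σ : List ℕ} (hσ : strPrefix σ g) {n y : ℕ} (hy : y ∈ Φ.app (σ, n)) : f n = y := by
  obtain ⟨K, hK, hfK⟩ := hf.exists_mem_app_ge n σ.length
  refine Part.mem_unique hfK (Φ.mono ?_ hy)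
  rw [← hσ]
  exact List.map_range_prefix_of_le g hK

theorem exists_prefix_dom_of_total {Φ : TuringFunctional} {A : Set ℕ}
    (hA : A.Nonempty) (hΦ : ∀ g ∈ EProb A, ∃ f, Φ.Total g f) {σ : List ℕ}
    (hσ : ∀ n ∈ σ, n ∈ A) (m : ℕ) :
    ∃ τ, σ <+: τ ∧ (∀ n ∈ τ, n ∈ A) ∧ (Φ.app (τ, m)).Dom := by
  obtain ⟨g, hg, hσg⟩ := Set.exists_range_eq_strPrefix hA hσ
  obtain ⟨f, hf⟩ := hΦ g hg
  obtain ⟨K, hK, hfK⟩ := hf.exists_mem_app_ge m σ.length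
  refine ⟨_, hσg ▸ List.map_range_prefix_of_le g hK, ?_, Part.dom_iff_mem.2 ⟨_, hfK⟩⟩
  rintro _ hn
  obtain ⟨i, -, rfl⟩ := List.mem_map.1 hn
  exact hg ▸ ⟨i, rfl⟩

theorem mem_of_forall_exists_prefix {Φ : TuringFunctional} {A : Set ℕ}
    (hA : A.Nonempty) {C : Set (ℕ → ℕ)} (hC : IsClosed C)
    (hΦ : ∀ g ∈ EProb A, ∃ f, Φ.Total g f ∧ f ∈ C) {h : ℕ → ℕ}
    (hh : ∀ M, ∃ σ : List ℕ, (∀ n ∈ σ, n ∈ A) ∧ ∀ i < M, h i ∈ Φ.app (σ, i)) : h ∈ C := by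
  refine hC.mem_of_forall_exists_eqOn fun M => ?_
  obtain ⟨σ, hσA, hσh⟩ := hh M
  obtain ⟨g, hg, hσg⟩ := Set.exists_range_eq_strPrefix hA hσA
  obtain ⟨f, hf, hfC⟩ := hΦ g hg
  exact ⟨f, hfC, fun i hi => hf.eq_of_mem_app hσg (hσh i hi)⟩

end TuringFunctional

namespace HaltingSearch

variable {P : ℕ → Prop} [DecidablePred P] {c : Code}

def witnessList (z : ℕ) : List ℕ := Denumerable.ofNat (List ℕ) z.unpair.1

variable (P) in
-- Every `z` is accepted when `a.1` has an entry outside `P`: this makes the search total.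
def IsHaltingExtension (c : Code) (a : List ℕ × ℕ) (z : ℕ) : Bool :=
  !(a.1.all fun n => decide (P n)) ||
    ((a.1 ++ witnessList z).all (fun n => decide (P n)) &&
      (evaln z.unpair.2 c (encode (a.1 ++ witnessList z, a.2))).isSome)

theorem primrec_isHaltingExtension (hP : Primrec fun n => decide (P n)) (c : Code) :
    Primrec₂ (IsHaltingExtension P c) := by
  have hext : Primrec fun x : (List ℕ × ℕ) × ℕ => x.1.1 ++ witnessList x.2 :=
    Primrec.list_append.comp (Primrec.fst.comp Primrec.fst)
      ((Primrec.ofNat (List ℕ)).comp (Primrec.fst.comp (Primrec.unpair.comp Primrec.snd)))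
  have hhalt : Primrec fun x : (List ℕ × ℕ) × ℕ =>
      (evaln x.2.unpair.2 c (encode (x.1.1 ++ witnessList x.2, x.1.2))).isSome :=
    Primrec.option_isSome.comp <| primrec_evaln.comp <|
      ((Primrec.snd.comp (Primrec.unpair.comp Primrec.snd)).pair (Primrec.const c)).pair
        (Primrec.encode.comp (hext.pair (Primrec.snd.comp Primrec.fst)))
  exact ((Primrec.dom_bool₂ (· || ·)).comp
    (Primrec.not.comp ((Primrec.list_all hP).comp (Primrec.fst.comp Primrec.fst)))
    ((Primrec.dom_bool₂ (· && ·)).comp ((Primrec.list_all hP).comp hext) hhalt)).to₂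

theorem exists_isHaltingExtension
    (hext : ∀ (m : ℕ) (σ : List ℕ), (∀ n ∈ σ, P n) →
      ∃ τ, σ <+: τ ∧ (∀ n ∈ τ, P n) ∧ (c.eval (encode (τ, m))).Dom)
    (a : List ℕ × ℕ) : ∃ z, IsHaltingExtension P c a z = true := by
  by_cases ha : ∀ n ∈ a.1, P n
  · obtain ⟨_, ⟨l, rfl⟩, hτ, hhalt⟩ := hext a.2 a.1 ha
    obtain ⟨k, hk⟩ := evaln_complete.1 (Part.get_mem hhalt)
    have hall : ((a.1 ++ l).all fun n => decide (P n)) = true :=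
      List.all_eq_true.2 fun n hn => decide_eq_true (hτ n hn)
    refine ⟨Nat.pair (encode l) k, ?_⟩
    simp only [IsHaltingExtension, witnessList, Nat.unpair_pair, Denumerable.ofNat_encode, hall,
      Option.isSome_iff_exists.2 ⟨_, hk⟩, Bool.and_true, Bool.or_true]
  · have hall : (a.1.all fun n => decide (P n)) = false := by simpa using ha
    exact ⟨0, by simp [IsHaltingExtension, hall]⟩

theorem isHaltingExtension_spec {σ : List ℕ} {m z : ℕ}
    (h : IsHaltingExtension P c (σ, m) z = true) (hσ : ∀ n ∈ σ, P n) :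
    (∀ n ∈ σ ++ witnessList z, P n) ∧
      ((evaln z.unpair.2 c (encode (σ ++ witnessList z, m))).isSome = true) := by
  have hall : (σ.all fun n => decide (P n)) = true := by simpa using hσ
  simp only [IsHaltingExtension, hall, Bool.not_true, Bool.false_or, Bool.and_eq_true,
    List.all_eq_true, decide_eq_true_eq] at h
  exact h

def searchPath (next : List ℕ × ℕ → ℕ) : ℕ → List ℕ
  | 0 => []
  | m + 1 => searchPath next m ++ witnessList (next (searchPath next m, m))

theorem computable_searchPath {next : List ℕ × ℕ → ℕ} (hnext : Computable next) :
    Computable (searchPath next) := by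
  have hstep : Computable₂ fun (_ : ℕ) (p : ℕ × List ℕ) => p.2 ++ witnessList (next (p.2, p.1)) :=
    (Computable.list_append.comp (Computable.snd.comp Computable.snd)
      ((Primrec.ofNat (List ℕ)).to_comp.comp (Computable.fst.comp (Computable.unpair.comp
        (hnext.comp ((Computable.snd.comp Computable.snd).pair
          (Computable.fst.comp Computable.snd))))))).to₂
  refine (Computable.nat_rec Computable.id (Computable.const []) hstep).of_eq fun m => ?_
  induction m with
  | zero => rfl
  | succ m ih => simp [searchPath, ← ih]

theorem searchPath_prefix (next : List ℕ × ℕ → ℕ) {i j : ℕ} (h : i ≤ j) :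
    searchPath next i <+: searchPath next j := by
  induction j, h using Nat.le_induction with
  | base => exact List.prefix_refl _
  | succ j _ ih => exact ih.trans (List.prefix_append _ _)

end HaltingSearch

open HaltingSearch in
theorem TuringFunctional.exists_computable_of_forall_extend {P : ℕ → Prop} [DecidablePred P]
    (Φ : TuringFunctional) (hP : Primrec fun n => decide (P n))
    (hext : ∀ m σ, (∀ n ∈ σ, P n) → ∃ τ, σ <+: τ ∧ (∀ n ∈ τ, P n) ∧ (Φ.app (τ, m)).Dom) :
    ∃ h : ℕ → ℕ, Computable h ∧ ∀ M, ∃ σ, (∀ n ∈ σ, P n) ∧ ∀ i < M, h i ∈ Φ.app (σ, i) := by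
  obtain ⟨c, hc⟩ := Φ.exists_code
  have hfind := exists_isHaltingExtension (P := P) (c := c) (by simpa only [hc] using hext)
  obtain ⟨next, hnext, hnext_spec⟩ : ∃ next : List ℕ × ℕ → ℕ, Computable next ∧
      ∀ a, IsHaltingExtension P c a (next a) = true :=
    ⟨_, Computable.nat_find (primrec_isHaltingExtension hP c).to_comp hfind,
      fun a => Nat.find_spec (hfind a)⟩
  have hpath : ∀ m, ∀ n ∈ searchPath next m, P n := by
    intro m
    induction m with
    | zero => simp [searchPath]
    | succ m ih => exact (isHaltingExtension_spec (hnext_spec _) ih).1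
  have hpath_comp := computable_searchPath hnext
  refine ⟨fun m => (evaln (next (searchPath next m, m)).unpair.2 c
    (encode (searchPath next (m + 1), m))).getD 0, ?_, fun M => ⟨searchPath next M, hpath M,
      fun i hi => Φ.mono (searchPath_prefix next hi) ?_⟩⟩
  · exact Primrec.option_getD.to_comp.comp (primrec_evaln.to_comp.comp
      (((Computable.snd.comp (Computable.unpair.comp
        (hnext.comp (hpath_comp.pair Computable.id)))).pair (Computable.const c)).pair
      (Computable.encode.comp ((hpath_comp.comp Computable.succ).pair Computable.id))))
      (Computable.const 0)
  · obtain ⟨y, hy⟩ := Option.isSome_iff_exists.1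
      (isHaltingExtension_spec (hnext_spec (searchPath next i, i)) (hpath i)).2
    rw [← hc]
    simp only [searchPath, hy, Option.getD_some]
    exact evaln_sound hy

namespace EnumCut

-- `⟨a, b⟩` codes `a / (b + 1)`, so every nonnegative rational has a code.
def val (n : ℕ) : ℚ := n.unpair.1 / (n.unpair.2 + 1)

theorem val_nonneg (n : ℕ) : 0 ≤ val n := by
  unfold val
  positivity

theorem exists_val_eq {x : ℚ} (hx : 0 ≤ x) : ∃ n, val n = x := by
  refine ⟨Nat.pair x.num.toNat (x.den - 1), ?_⟩
  have hnum : ((x.num.toNat : ℕ) : ℚ) = x.num := by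
    exact_mod_cast Int.toNat_of_nonneg (Rat.num_nonneg.2 hx)
  have hden : ((x.den - 1 : ℕ) : ℚ) + 1 = x.den := by
    exact_mod_cast Nat.sub_add_cancel x.den_pos
  rw [val, Nat.unpair_pair, hnum, hden, Rat.num_div_den]

theorem exists_val_between {p r : ℕ} (h : val p < val r) : ∃ n, val p < val n ∧ val n < val r := by
  obtain ⟨x, hpx, hxr⟩ := exists_between h
  obtain ⟨n, rfl⟩ := exists_val_eq ((val_nonneg p).trans hpx.le)
  exact ⟨n, hpx, hxr⟩

theorem val_lt_val_iff (m n : ℕ) :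
    val m < val n ↔ m.unpair.1 * (n.unpair.2 + 1) < n.unpair.1 * (m.unpair.2 + 1) := by
  rw [val, val, div_lt_div_iff₀ (by positivity) (by positivity)]
  norm_cast

theorem primrec_val_lt (q : ℕ) : Primrec fun n => decide (val n < val q) :=
  (Primrec.nat_lt.comp
      (Primrec.nat_mul.comp (Primrec.fst.comp Primrec.unpair) (Primrec.const _))
      (Primrec.nat_mul.comp (Primrec.const _)
        (Primrec.succ.comp (Primrec.snd.comp Primrec.unpair)))).decide.of_eq
    fun n => decide_eq_decide.2 (val_lt_val_iff n q).symm

def Below (q : ℕ) (σ : List ℕ) : Prop := ∀ n ∈ σ, val n < val q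

theorem exists_below_between {p q : ℕ} {σ : List ℕ} (hpq : val p < val q) (hσ : Below q σ) :
    ∃ p', val p ≤ val p' ∧ val p' < val q ∧ Below p' σ := by
  induction σ with
  | nil => exact ⟨p, le_rfl, hpq, by simp [Below]⟩
  | cons n σ ih =>
    obtain ⟨p', hpp', hp'q, hσp'⟩ := ih fun k hk => hσ k (List.mem_cons_of_mem n hk)
    by_cases hn : val n < val p'
    · exact ⟨p', hpp', hp'q, by simpa [Below, hn] using hσp'⟩
    · obtain ⟨n', hnn', hn'q⟩ := exists_val_between (hσ n List.mem_cons_self)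
      refine ⟨n', hpp'.trans ((not_lt.1 hn).trans hnn'.le), hn'q, ?_⟩
      simp only [Below, List.mem_cons, forall_eq_or_imp]
      exact ⟨hnn', fun k hk => (hσp' k hk).trans ((not_lt.1 hn).trans_lt hnn')⟩

def Refines (x y : ℕ × ℕ) : Prop := val x.1 ≤ val y.1 ∧ val y.1 < val y.2 ∧ val y.2 ≤ val x.2

theorem Refines.trans {x y z : ℕ × ℕ} (hxy : Refines x y) (hyz : Refines y z) : Refines x z :=
  ⟨hxy.1.trans hyz.1, hyz.2.1, hyz.2.2.trans hxy.2.2⟩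

def DiagReq (c : Code) (x : ℕ × ℕ) : Prop :=
  ∃ n, (c.eval n).Dom ∧ val x.2 ≤ val n ∨ ¬(c.eval n).Dom ∧ val n ≤ val x.1

def TotalBelow (c : Code) (q : ℕ) : Prop :=
  ∀ (m : ℕ) (σ : List ℕ), Below q σ → ∃ τ, σ <+: τ ∧ Below q τ ∧ (c.eval (encode (τ, m))).Dom

def FuncReq (c : Code) (x : ℕ × ℕ) : Prop :=
  (∃ (m : ℕ) (σ : List ℕ), Below x.1 σ ∧
      ∀ τ, σ <+: τ → Below x.2 τ → ¬(c.eval (encode (τ, m))).Dom) ∨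
    ∃ q, val q ≤ val x.1 ∧ TotalBelow c q

theorem DiagReq.of_refines {c : Code} {x y : ℕ × ℕ} (h : DiagReq c x) (hxy : Refines x y) :
    DiagReq c y := by
  obtain ⟨n, hn⟩ := h
  exact ⟨n, hn.imp (And.imp_right hxy.2.2.trans) (And.imp_right (·.trans hxy.1))⟩

theorem exists_refines_diagReq (c : Code) {x : ℕ × ℕ} (hx : val x.1 < val x.2) :
    ∃ y, Refines x y ∧ DiagReq c y := by
  obtain ⟨n, hpn, hnr⟩ := exists_val_between hx
  by_cases hn : (c.eval n).Dom
  · exact ⟨(x.1, n), ⟨le_rfl, hpn, hnr.le⟩, n, Or.inl ⟨hn, le_rfl⟩⟩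
  · exact ⟨(n, x.2), ⟨hpn.le, hnr, le_rfl⟩, n, Or.inr ⟨hn, le_rfl⟩⟩

theorem exists_refines_funcReq (c : Code) {x : ℕ × ℕ} (hx : val x.1 < val x.2) :
    ∃ y, Refines x y ∧ FuncReq c y := by
  obtain ⟨q, hpq, hqr⟩ := exists_val_between hx
  by_cases hq : TotalBelow c q
  · exact ⟨(q, x.2), ⟨hpq.le, hqr, le_rfl⟩, Or.inr ⟨q, le_rfl, hq⟩⟩
  · obtain ⟨m, σ, hσ, hstuck⟩ : ∃ (m : ℕ) (σ : List ℕ), Below q σ ∧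
        ∀ τ, σ <+: τ → Below q τ → ¬(c.eval (encode (τ, m))).Dom := by
      simpa [TotalBelow] using hq
    obtain ⟨p', hpp', hp'q, hσp'⟩ := exists_below_between hpq hσ
    exact ⟨(p', q), ⟨hpp', hp'q, hqr.le⟩, Or.inl ⟨m, σ, hσp', hstuck⟩⟩

theorem exists_refines_diagReq_funcReq (c : Code) {x : ℕ × ℕ} (hx : val x.1 < val x.2) :
    ∃ y, Refines x y ∧ DiagReq c y ∧ FuncReq c y := by
  obtain ⟨y, hxy, hy⟩ := exists_refines_diagReq c hx
  obtain ⟨z, hyz, hz⟩ := exists_refines_funcReq c hxy.2.1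
  exact ⟨z, hxy.trans hyz, hy.of_refines hyz, hz⟩

noncomputable def stage : ℕ → {x : ℕ × ℕ // val x.1 < val x.2}
  | 0 => ⟨(0, Nat.pair 1 0), by simp [val]⟩
  | s + 1 =>
    ⟨_, (exists_refines_diagReq_funcReq (Denumerable.ofNat Code s) (stage s).2).choose_spec.1.2.1⟩

theorem stage_succ_spec (s : ℕ) :
    Refines (stage s).1 (stage (s + 1)).1 ∧ DiagReq (Denumerable.ofNat Code s) (stage (s + 1)).1 ∧
      FuncReq (Denumerable.ofNat Code s) (stage (s + 1)).1 :=
  (exists_refines_diagReq_funcReq _ (stage s).2).choose_spec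

def cut : Set ℕ := {n | ∃ s, val n ≤ val (stage s).1.1}

theorem zero_mem_cut : 0 ∈ cut := ⟨0, by simpa [val] using val_nonneg _⟩

theorem val_lo_lt_val_hi (s t : ℕ) : val (stage s).1.1 < val (stage t).1.2 := by
  have hlo : Monotone fun s => val (stage s).1.1 :=
    monotone_nat_of_le_succ fun s => (stage_succ_spec s).1.1
  have hhi : Antitone fun s => val (stage s).1.2 :=
    antitone_nat_of_succ_le fun s => (stage_succ_spec s).1.2.2
  calc val (stage s).1.1 ≤ val (stage (max s t)).1.1 := hlo (le_max_left s t)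
    _ < val (stage (max s t)).1.2 := (stage (max s t)).2
    _ ≤ val (stage t).1.2 := hhi (le_max_right s t)

theorem val_lt_hi_of_mem_cut {n : ℕ} (hn : n ∈ cut) (t : ℕ) : val n < val (stage t).1.2 := by
  obtain ⟨s, hs⟩ := hn
  exact hs.trans_lt (val_lo_lt_val_hi s t)

theorem mem_cut_of_below {q s : ℕ} (hq : val q ≤ val (stage s).1.1) {σ : List ℕ}
    (hσ : Below q σ) : ∀ n ∈ σ, n ∈ cut :=
  fun n hn => ⟨s, ((hσ n hn).trans_le hq).le⟩

theorem cut_ne_dom (c : Code) : {n | (c.eval n).Dom} ≠ cut := by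
  have hdiag := (stage_succ_spec (encode c)).2.1
  rw [Denumerable.ofNat_encode] at hdiag
  obtain ⟨n, ⟨hn, hle⟩ | ⟨hn, hle⟩⟩ := hdiag
  · intro h
    exact (val_lt_hi_of_mem_cut (h ▸ hn) _).not_ge hle
  · intro h
    exact hn (h.symm ▸ ⟨_, hle⟩ : n ∈ {n | (c.eval n).Dom})

theorem not_exists_computable_mem_eProb : ¬ ∃ g ∈ EProb cut, Computable g := by
  rintro ⟨g, hg, hcomp⟩
  obtain ⟨c, hc⟩ := hcomp.exists_code_dom_eq_range
  exact cut_ne_dom c (hc.trans hg)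

theorem exists_computable_mem_of_medvedevLE {C : Set (ℕ → ℕ)} (hC : IsClosed C)
    (hCE : MedvedevLE C (EProb cut)) : ∃ g ∈ C, Computable g := by
  obtain ⟨Φ, hΦ⟩ := hCE
  obtain ⟨c, hc⟩ := Φ.exists_code
  have hfunc := (stage_succ_spec (encode c)).2.2
  rw [Denumerable.ofNat_encode] at hfunc
  simp only [FuncReq, TotalBelow, hc] at hfunc
  obtain ⟨m, σ, hσ, hstuck⟩ | ⟨q, hq, htot⟩ := hfunc
  · obtain ⟨τ, hστ, hτ, hdom⟩ := Φ.exists_prefix_dom_of_total ⟨0, zero_mem_cut⟩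
      (fun g hg => (hΦ g hg).imp fun _ => And.left) (mem_cut_of_below le_rfl hσ) m
    exact absurd hdom (hstuck τ hστ fun n hn => val_lt_hi_of_mem_cut (hτ n hn) _)
  · obtain ⟨h, hcomp, hh⟩ := Φ.exists_computable_of_forall_extend (primrec_val_lt q) htot
    refine ⟨h, Φ.mem_of_forall_exists_prefix ⟨0, zero_mem_cut⟩ hC hΦ fun M => ?_, hcomp⟩
    obtain ⟨σ, hσ, hσh⟩ := hh M
    exact ⟨σ, mem_cut_of_below hq hσ, hσh⟩

end EnumCut

/-- There is a nonzero degree of enumerability that does not bound any nonzero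
closed Medvedev degree. -/
theorem stmt19 :
    ∃ A : Set ℕ, A.Nonempty ∧ (¬ ∃ g ∈ EProb A, Computable g) ∧
      ∀ C : Set (ℕ → ℕ), IsClosed C → MedvedevLE C (EProb A) →
        ∃ g ∈ C, Computable g :=
  ⟨EnumCut.cut, ⟨0, EnumCut.zero_mem_cut⟩, EnumCut.not_exists_computable_mem_eProb,
    fun _ hC hCE => EnumCut.exists_computable_mem_of_medvedevLE hC hCE⟩
end
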